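/- arXiv:2201.02752 — 7 statements merged into one kernel-verified Lean document; each statement's English description precedes it below -/
import Mathlib

section
/- Let ρ ∈ (-1,1). The function g(y) = -log((√(1+2ρy+y²) - y - ρ)/(1-ρ)) is the unique C^1 solution on ℝ of the ODE g'(y)²(1+2ρy+y²) = 1 with initial condition g(0)=0 and satisfying g(y)/y > 0 for all y ≠ 0. -/
/-!
Since `1 + 2ρy + y² - (y + ρ)² = 1 - ρ² > 0`, the logarithm is taken of a positive number and `g' = 1 / √(1 + 2ρy + y²)`,
so `g` solves the ODE and is strictly increasing through `g 0 = 0`. Conversely, the ODE forces `h'` never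
to vanish, hence by Darboux's theorem `h'` has constant sign, which the condition `h 1 > 0` makes positive;
so `h' = 1 / √(1 + 2ρy + y²) = g'`, and `h = g` because both vanish at `0`.
-/

open Real

section
variable {ρ : ℝ}

lemma one_add_two_mul_add_sq_pos (hρ₁ : -1 < ρ) (hρ₂ : ρ < 1) (y : ℝ) :
    0 < 1 + 2 * ρ * y + y ^ 2 := by
  nlinarith [sq_nonneg (y + ρ)]

lemma sqrt_one_add_two_mul_add_sq_sub_pos (hρ₁ : -1 < ρ) (hρ₂ : ρ < 1) (y : ℝ) :
    0 < √(1 + 2 * ρ * y + y ^ 2) - y - ρ := by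
  have hlt : |y + ρ| < √(1 + 2 * ρ * y + y ^ 2) := by
    rw [← sqrt_sq_eq_abs]
    exact sqrt_lt_sqrt (sq_nonneg _) (by nlinarith)
  linarith [le_abs_self (y + ρ)]

lemma hasDerivAt_neg_log_sqrt_sub (hρ₁ : -1 < ρ) (hρ₂ : ρ < 1) (y : ℝ) :
    HasDerivAt (fun y => -log ((√(1 + 2 * ρ * y + y ^ 2) - y - ρ) / (1 - ρ)))
      (√(1 + 2 * ρ * y + y ^ 2))⁻¹ y := by
  have hQ := one_add_two_mul_add_sq_pos hρ₁ hρ₂ y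
  have hu := sqrt_one_add_two_mul_add_sq_sub_pos hρ₁ hρ₂ y
  have hQ' : HasDerivAt (fun y => 1 + 2 * ρ * y + y ^ 2) (2 * ρ + 2 * y) y :=
    ((((hasDerivAt_id' y).const_mul (2 * ρ)).const_add 1).fun_add (hasDerivAt_pow 2 y)).congr_deriv
      (by norm_num)
  have hlog := ((((hQ'.sqrt hQ.ne').fun_sub (hasDerivAt_id' y)).sub_const ρ).div_const (1 - ρ)).log
    (div_pos hu (sub_pos.2 hρ₂)).ne'
  refine hlog.neg.congr_deriv ?_
  have h1ρ : 1 - ρ ≠ 0 := (sub_pos.2 hρ₂).ne'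
  field_simp
  nlinarith [sq_sqrt hQ.le]

end

lemma StrictMono.div_pos_of_map_zero {f : ℝ → ℝ} (hf : StrictMono f) (h0 : f 0 = 0) {y : ℝ}
    (hy : y ≠ 0) : 0 < f y / y := by
  rcases hy.lt_or_gt with hy | hy
  · exact div_pos_of_neg_of_neg (h0 ▸ hf hy) hy
  · exact div_pos (h0 ▸ hf hy) hy

/-- Darboux's theorem applies because `deriv f y ≠ 0` forces `f` to be differentiable at `y`
(elsewhere `deriv` takes the junk value `0`). -/
lemma deriv_pos_of_forall_deriv_ne_zero {f : ℝ → ℝ} (hf : ∀ y, deriv f y ≠ 0) {a b : ℝ}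
    (hab : a < b) (hfab : f a < f b) (y : ℝ) : 0 < deriv f y := by
  have hd : ∀ x, HasDerivAt f (deriv f x) x :=
    fun x => (differentiableAt_of_deriv_ne_zero (hf x)).hasDerivAt
  rcases hasDerivWithinAt_forall_lt_or_forall_gt_of_forall_ne convex_univ
    (fun x _ => (hd x).hasDerivWithinAt) (fun x _ => hf x) with hneg | hpos
  · have hanti : StrictAnti f := strictAnti_of_deriv_neg fun x => hneg x (Set.mem_univ x)
    exact absurd (hanti hab) hfab.not_gt
  · exact hpos y (Set.mem_univ y)

lemma eq_inv_sqrt_of_sq_mul_eq_one {a q : ℝ} (ha : 0 < a) (h : a ^ 2 * q = 1) : a = (√q)⁻¹ := by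
  have hq : q = (a ^ 2)⁻¹ := eq_inv_of_mul_eq_one_right h
  rw [hq, sqrt_inv, sqrt_sq ha.le, inv_inv]

lemma eq_of_hasDerivAt_eq {f g f' : ℝ → ℝ} (hf : ∀ y, HasDerivAt f (f' y) y)
    (hg : ∀ y, HasDerivAt g (f' y) y) {x : ℝ} (hfgx : f x = g x) : f = g :=
  eq_of_fderiv_eq (fun y => (hf y).differentiableAt) (fun y => (hg y).differentiableAt)
    (fun y => by rw [(hf y).hasFDerivAt.fderiv, (hg y).hasFDerivAt.fderiv]) x hfgx

theorem stmt2 (ρ : ℝ) (hρ₁ : -1 < ρ) (hρ₂ : ρ < 1) (g : ℝ → ℝ)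
    (hg : ∀ y : ℝ, g y = -Real.log ((Real.sqrt (1 + 2 * ρ * y + y ^ 2) - y - ρ) / (1 - ρ))) :
    (ContDiff ℝ 1 g ∧ g 0 = 0 ∧
      (∀ y : ℝ, (deriv g y) ^ 2 * (1 + 2 * ρ * y + y ^ 2) = 1) ∧
      (∀ y : ℝ, y ≠ 0 → g y / y > 0)) ∧
    ∀ h : ℝ → ℝ, ContDiff ℝ 1 h → h 0 = 0 →
      (∀ y : ℝ, (deriv h y) ^ 2 * (1 + 2 * ρ * y + y ^ 2) = 1) →
      (∀ y : ℝ, y ≠ 0 → h y / y > 0) → h = g := by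
  have hQ := one_add_two_mul_add_sq_pos hρ₁ hρ₂
  have hg' : ∀ y, HasDerivAt g (√(1 + 2 * ρ * y + y ^ 2))⁻¹ y := by
    rw [funext hg]
    exact hasDerivAt_neg_log_sqrt_sub hρ₁ hρ₂
  have hg0 : g 0 = 0 := by simp [hg, (sub_pos.2 hρ₂).ne']
  have hmono : StrictMono g :=
    strictMono_of_deriv_pos fun y => by rw [(hg' y).deriv]; exact inv_pos.2 (sqrt_pos.2 (hQ y))
  refine ⟨⟨?_, hg0, fun y => ?_, fun y hy => hmono.div_pos_of_map_zero hg0 hy⟩, ?_⟩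
  · refine contDiff_one_iff_deriv.2 ⟨fun y => (hg' y).differentiableAt, ?_⟩
    rw [funext fun y => (hg' y).deriv]
    exact Continuous.inv₀ (by fun_prop) fun y => (sqrt_pos.2 (hQ y)).ne'
  · rw [(hg' y).deriv, inv_pow, sq_sqrt (hQ y).le, inv_mul_cancel₀ (hQ y).ne']
  · intro h _ h0 hode hsign
    have hne : ∀ y, deriv h y ≠ 0 := fun y hy => by simpa [hy] using hode y
    have hpos := deriv_pos_of_forall_deriv_ne_zero hne zero_lt_one
      (by simpa [h0] using hsign 1 one_ne_zero)
    have hh' : ∀ y, HasDerivAt h (√(1 + 2 * ρ * y + y ^ 2))⁻¹ y := fun y =>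
      eq_inv_sqrt_of_sq_mul_eq_one (hpos y) (hode y) ▸
        (differentiableAt_of_deriv_ne_zero (hne y)).hasDerivAt
    exact eq_of_hasDerivAt_eq hh' hg' (h0.trans hg0.symm)
end

section
/- Let H ∈ (0,1/2], ρ ∈ (-1,1), q(y) = 1 + 2ρy/(2H+1) + y²/(2H+1)², and define φ(y,z) = ((1-2H)z + √((1-2H)²z² + 8H·q(y)))/(2q(y)) for (y,z) ∈ ℝ × [0,∞). Then α = 1 is the unique positive solution of the fixed-point equation α = φ(0, 1/φ(0, 1/α)). -/
/-!
For `z ≥ 0`, `φ 0 z` is the positive root of `x² = (1 - 2H) z x + 2H`. If `α = φ 0 (1/β)` and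
`β = φ 0 (1/α)`, adding the two root equations (multiplied by `β` and `α`) gives
`αβ (α + β) = ((1 - 2H) + 2H)(α + β)`, so `αβ = 1`; then `α² = (1 - 2H) α² + 2H`, i.e.
`α = 1`.
-/

noncomputable section

def posRoot (b c : ℝ) : ℝ := (b + √(b ^ 2 + 4 * c)) / 2

theorem posRoot_pos (b : ℝ) {c : ℝ} (hc : 0 < c) : 0 < posRoot b c := by
  have : |b| < √(b ^ 2 + 4 * c) := by
    rw [← Real.sqrt_sq_eq_abs]
    exact Real.sqrt_lt_sqrt (sq_nonneg b) (by linarith)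
  unfold posRoot
  linarith [neg_abs_le b]

theorem posRoot_sq (b : ℝ) {c : ℝ} (hc : 0 ≤ c) : posRoot b c ^ 2 = b * posRoot b c + c := by
  have hs : √(b ^ 2 + 4 * c) ^ 2 = b ^ 2 + 4 * c := Real.sq_sqrt (by positivity)
  unfold posRoot
  linear_combination hs / 4

theorem posRoot_eq_one {b c : ℝ} (hbc : b + c = 1) (hc : 0 ≤ c) : posRoot b c = 1 := by
  have : b ^ 2 + 4 * c = (1 + c) ^ 2 := by rw [← sub_eq_of_eq_add' hbc.symm]; ring
  rw [posRoot, this, Real.sqrt_sq (by linarith)]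
  linarith

theorem mul_eq_one_of_eq_posRoot_div {a c α β : ℝ} (hc : 0 ≤ c) (hac : a + c = 1)
    (hα : 0 < α) (hβ : 0 < β) (hαβ : α = posRoot (a / β) c) (hβα : β = posRoot (a / α) c) :
    α * β = 1 := by
  have hα_sq : α ^ 2 * β = a * α + c * β := by
    have := posRoot_sq (a / β) hc
    rw [← hαβ] at this
    field_simp at this
    linear_combination this
  have hβ_sq : β ^ 2 * α = a * β + c * α := by
    have := posRoot_sq (a / α) hc
    rw [← hβα] at this
    field_simp at this
    linear_combination this
  have : (α * β) * (α + β) = 1 * (α + β) := by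
    linear_combination hα_sq + hβ_sq + (α + β) * hac
  exact mul_right_cancel₀ (by positivity) this

theorem eq_one_of_eq_posRoot_div {a c α β : ℝ} (hc : 0 < c) (hac : a + c = 1)
    (hα : 0 < α) (hβ : 0 < β) (hαβ : α = posRoot (a / β) c) (hβα : β = posRoot (a / α) c) :
    α = 1 := by
  have hinv : a / β = a * α := by
    rw [div_eq_mul_inv,
      ← eq_inv_of_mul_eq_one_left (mul_eq_one_of_eq_posRoot_div hc.le hac hα hβ hαβ hβα)]
  have hα_sq := posRoot_sq (a / β) hc.le
  rw [← hαβ, hinv] at hα_sq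
  have : c * α ^ 2 = c * 1 := by linear_combination hα_sq + α ^ 2 * hac
  have hα_sq_one : α ^ 2 = 1 := mul_left_cancel₀ hc.ne' this
  nlinarith

end

theorem stmt6_general (H ρ : ℝ) (hH₁ : 0 < H)
    (q : ℝ → ℝ)
    (hq : ∀ y : ℝ, q y = 1 + 2 * ρ * y / (2 * H + 1) + y ^ 2 / (2 * H + 1) ^ 2)
    (φ : ℝ → ℝ → ℝ)
    (hφ : ∀ y z : ℝ, 0 ≤ z → φ y z =
      ((1 - 2 * H) * z + Real.sqrt ((1 - 2 * H) ^ 2 * z ^ 2 + 8 * H * q y)) / (2 * q y)) :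
    (1 : ℝ) = φ 0 (1 / φ 0 (1 / 1)) ∧
    ∀ α : ℝ, α > 0 → α = φ 0 (1 / φ 0 (1 / α)) → α = 1 := by
  have hq0 : q 0 = 1 := by rw [hq]; ring
  have hφ0 : ∀ z, 0 ≤ z → φ 0 z = posRoot ((1 - 2 * H) * z) (2 * H) := fun z hz => by
    rw [hφ 0 z hz, hq0, posRoot]
    ring_nf
  have hH2 : 0 < 2 * H := by positivity
  have hsum : (1 - 2 * H) + 2 * H = 1 := by ring
  have hφ01 : φ 0 1 = 1 := by
    rw [hφ0 1 zero_le_one, mul_one, posRoot_eq_one hsum hH2.le]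
  refine ⟨by rw [div_one, hφ01, div_one, hφ01], fun α hα hfix => ?_⟩
  have hβ := hφ0 (1 / α) (by positivity)
  set β := φ 0 (1 / α)
  rw [mul_one_div] at hβ
  have hβ_pos : 0 < β := hβ ▸ posRoot_pos _ hH2
  rw [hφ0 (1 / β) (by positivity), mul_one_div] at hfix
  exact eq_one_of_eq_posRoot_div hH2 hsum hα hβ_pos hfix hβ

theorem stmt6 (H ρ : ℝ) (hH₁ : 0 < H) (hH₂ : H ≤ 1 / 2) (hρ₁ : -1 < ρ) (hρ₂ : ρ < 1)
    (q : ℝ → ℝ)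
    (hq : ∀ y : ℝ, q y = 1 + 2 * ρ * y / (2 * H + 1) + y ^ 2 / (2 * H + 1) ^ 2)
    (φ : ℝ → ℝ → ℝ)
    (hφ : ∀ y z : ℝ, 0 ≤ z → φ y z =
      ((1 - 2 * H) * z + Real.sqrt ((1 - 2 * H) ^ 2 * z ^ 2 + 8 * H * q y)) / (2 * q y)) :
    (1 : ℝ) = φ 0 (1 / φ 0 (1 / 1)) ∧
    ∀ α : ℝ, α > 0 → α = φ 0 (1 / φ 0 (1 / α)) → α = 1 :=
  stmt6_general H ρ hH₁ q hq φ hφ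
end

section
/- Let H ∈ (0,1/2], ρ ∈ (-1,1), q(y) = 1+2ρy/(2H+1)+y²/(2H+1)², φ(y,z) = ((1-2H)z + √((1-2H)²z² + 8H q(y)))/(2q(y)). Then φ : ℝ × [0,∞) → (0,∞) is strictly positive, is nondecreasing in z, and ∂φ/∂z is uniformly bounded on ℝ × [0,∞). -/
/-!
Writing `u = (1 - 2H) z` and `c = 8 H q(y) > 0`, we get `φ(y, z) = (u + √(u² + c)) / (2 q(y))`.
The map `u ↦ u + √(u² + c)` is positive (as `√(u² + c) > |u|`) and has derivative
`1 + u / √(u² + c) ∈ [0, 2]`, and `q(y) - (1 - ρ²) = (ρ + y / (2H + 1))² ≥ 0`.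
Hence `0 ≤ ∂φ/∂z ≤ 2 (1 - 2H) / (2 q(y)) ≤ 1 / (1 - ρ²)`.
-/

open Real

lemma one_sub_sq_le_one_add_two_mul_add_sq (ρ t : ℝ) : 1 - ρ ^ 2 ≤ 1 + 2 * ρ * t + t ^ 2 := by
  nlinarith [sq_nonneg (ρ + t)]

lemma abs_lt_sqrt_sq_add {c : ℝ} (hc : 0 < c) (u : ℝ) : |u| < √(u ^ 2 + c) :=
  (lt_sqrt (abs_nonneg u)).2 (by rw [sq_abs]; linarith)

lemma add_sqrt_sq_add_pos {c : ℝ} (hc : 0 < c) (u : ℝ) : 0 < u + √(u ^ 2 + c) := by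
  linarith [neg_abs_le u, abs_lt_sqrt_sq_add hc u]

lemma abs_div_sqrt_sq_add_le_one {c : ℝ} (hc : 0 ≤ c) (u : ℝ) : |u / √(u ^ 2 + c)| ≤ 1 := by
  rw [abs_div, abs_of_nonneg (sqrt_nonneg _)]
  exact div_le_one_of_le₀ (abs_le_sqrt (by linarith)) (sqrt_nonneg _)

lemma hasDerivAt_add_sqrt_sq_add {c : ℝ} (hc : 0 < c) (u : ℝ) :
    HasDerivAt (fun u => u + √(u ^ 2 + c)) (1 + u / √(u ^ 2 + c)) u := by
  have hsq : HasDerivAt (fun u => u ^ 2 + c) (2 * u) u := by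
    simpa using (hasDerivAt_pow 2 u).add_const c
  have h := (hasDerivAt_id u).add (hsq.sqrt (by positivity))
  rwa [mul_div_mul_left _ _ two_ne_zero] at h

lemma monotone_add_sqrt_sq_add {c : ℝ} (hc : 0 < c) : Monotone fun u => u + √(u ^ 2 + c) :=
  monotone_of_deriv_nonneg (fun u => (hasDerivAt_add_sqrt_sq_add hc u).differentiableAt)
    fun u => by
      rw [(hasDerivAt_add_sqrt_sq_add hc u).deriv]
      linarith [neg_abs_le (u / √(u ^ 2 + c)), abs_div_sqrt_sq_add_le_one hc.le u]

lemma abs_deriv_add_sqrt_sq_add_le {c : ℝ} (hc : 0 < c) (b z : ℝ) :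
    |deriv (fun z => b * z + √((b * z) ^ 2 + c)) z| ≤ 2 * |b| := by
  have h : deriv (fun z => b * z + √((b * z) ^ 2 + c)) z = (1 + b * z / √((b * z) ^ 2 + c)) * b :=
    ((hasDerivAt_add_sqrt_sq_add hc (b * z)).comp z
      ((hasDerivAt_id z).const_mul b |>.congr_deriv (mul_one b))).deriv
  have hw := abs_div_sqrt_sq_add_le_one hc.le (b * z)
  rw [h, abs_mul]
  gcongr
  exact (abs_add_le _ _).trans (by rw [abs_one]; linarith)

theorem stmt8 (H ρ : ℝ) (hH₁ : 0 < H) (hH₂ : H ≤ 1 / 2) (hρ₁ : -1 < ρ) (hρ₂ : ρ < 1)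
    (q : ℝ → ℝ)
    (hq : ∀ y : ℝ, q y = 1 + 2 * ρ * y / (2 * H + 1) + y ^ 2 / (2 * H + 1) ^ 2)
    (φ : ℝ → ℝ → ℝ)
    (hφ : ∀ y z : ℝ, φ y z =
      ((1 - 2 * H) * z + Real.sqrt ((1 - 2 * H) ^ 2 * z ^ 2 + 8 * H * q y)) / (2 * q y)) :
    (∀ y z : ℝ, 0 ≤ z → 0 < φ y z) ∧
    (∀ y z₁ z₂ : ℝ, 0 ≤ z₁ → z₁ ≤ z₂ → φ y z₁ ≤ φ y z₂) ∧
    ∃ C : ℝ, ∀ y z : ℝ, 0 ≤ z → |deriv (φ y) z| ≤ C := by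
  set b := 1 - 2 * H
  have hρ : 0 < 1 - ρ ^ 2 := by nlinarith
  have hq_lb (y : ℝ) : 1 - ρ ^ 2 ≤ q y := by
    rw [hq, mul_div_assoc, ← div_pow]
    exact one_sub_sq_le_one_add_two_mul_add_sq ρ _
  have hq_pos (y : ℝ) : 0 < 2 * q y := by linarith [hq_lb y]
  have hc (y : ℝ) : 0 < 8 * H * q y := by nlinarith [hq_pos y]
  have hφ_eq (y : ℝ) : φ y = fun z => (b * z + √((b * z) ^ 2 + 8 * H * q y)) / (2 * q y) :=
    funext fun z => by rw [hφ, mul_pow]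
  refine ⟨fun y z _ => ?_, fun y z₁ z₂ _ hz => ?_, 1 / (1 - ρ ^ 2), fun y z _ => ?_⟩
  · rw [hφ_eq]
    exact div_pos (add_sqrt_sq_add_pos (hc y) _) (hq_pos y)
  · rw [hφ_eq]
    exact div_le_div_of_nonneg_right (monotone_add_sqrt_sq_add (hc y)
      (mul_le_mul_of_nonneg_left hz (by linarith))) (hq_pos y).le
  · rw [hφ_eq, deriv_div_const, abs_div, abs_of_pos (hq_pos y)]
    calc _ ≤ 2 * |b| / (2 * q y) :=
          div_le_div_of_nonneg_right (abs_deriv_add_sqrt_sq_add_le (hc y) b z) (hq_pos y).le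
      _ ≤ 2 * 1 / (2 * (1 - ρ ^ 2)) := by
          gcongr
          · exact abs_le.2 ⟨by linarith, by linarith⟩
          · exact hq_lb y
      _ = 1 / (1 - ρ ^ 2) := by field_simp
end

section
/- Suppose v : (0,∞) → (0,∞) is continuous and f : (0,∞) → (0,∞) is differentiable with locally Lipschitz derivative. Define g(s) = log(K/s)/f(s) for a fixed K > 0. Then |g'(s)·v(s)| = 1 for almost every s > 0 together with g(K) = 0 and positivity of f holds if and only if f(s) = log(K/s)/∫_s^K dx/v(x) for s ≠ K and f(K) = v(K)/K. -/
open Set MeasureTheory Filter Topology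

/-! The derivative of `g` is continuous (this is where the local Lipschitz bound on `f'` enters),
so `|g' v| = 1` almost everywhere forces it everywhere on the connected half-line. At the strike
`g'(K) = -1 / (K f(K)) < 0`, hence `g' = -1 / v` throughout, and together with `g(K) = 0` this
identifies `g` with `s ↦ ∫_s^K dx / v(x)`: that is the formula for `f` away from `K`, while
`f(K) = v(K) / K` is read off `g'(K) v(K) = -1`. Conversely, the formula makes `g` equal to this
integral, whose derivative is `-1 / v`. -/

theorem ContinuousOn.of_forall_isCompact_lipschitzOnWith {X Y : Type*} [PseudoEMetricSpace X]
    [LocallyCompactSpace X] [PseudoEMetricSpace Y] {φ : X → Y} {U : Set X} (hU : IsOpen U)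
    (h : ∀ C : Set X, IsCompact C → C ⊆ U → ∃ L : NNReal, LipschitzOnWith L φ C) :
    ContinuousOn φ U := by
  intro x hx
  obtain ⟨C, hCx, hCU, hC⟩ := local_compact_nhds (hU.mem_nhds hx)
  obtain ⟨L, hL⟩ := h C hC hCU
  exact (hL.continuousOn.continuousAt hCx).continuousWithinAt

theorem hasDerivAt_integral_left_of_continuousOn_Ioi {E : Type*} [NormedAddCommGroup E]
    [NormedSpace ℝ E] [CompleteSpace E] {w : ℝ → E} {a b s : ℝ} (hw : ContinuousOn w (Ioi a))
    (hb : a < b) (hs : a < s) : HasDerivAt (fun t => ∫ x in t..b, w x) (-w s) s :=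
  intervalIntegral.integral_hasDerivAt_left
    ((hw.mono fun _ hx => (lt_min hs hb).trans_le hx.1).intervalIntegrable)
    (hw.stronglyMeasurableAtFilter isOpen_Ioi s hs) (hw.continuousAt (Ioi_mem_nhds hs))

theorem div_eq_iff_eq_div_of_ne_zero {α : Type*} [Field α] {a b c : α} (ha : a ≠ 0) :
    a / b = c ↔ b = a / c :=
  ⟨fun h => h ▸ (div_div_cancel₀ ha).symm, fun h => h ▸ div_div_cancel₀ ha⟩

theorem Real.log_div_ne_zero {K s : ℝ} (hK : 0 < K) (hs : 0 < s) (hsK : s ≠ K) :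
    Real.log (K / s) ≠ 0 :=
  Real.log_ne_zero_of_pos_of_ne_one (div_pos hK hs)
    (by rwa [Ne, div_eq_one_iff_eq hs.ne', eq_comm])

theorem hasDerivAt_log_div_div {K s f' : ℝ} {f : ℝ → ℝ} (hK : K ≠ 0) (hs : s ≠ 0)
    (hf : HasDerivAt f f' s) (hfs : f s ≠ 0) :
    HasDerivAt (fun t => Real.log (K / t) / f t)
      ((-s⁻¹ * f s - Real.log (K / s) * f') / f s ^ 2) s := by
  have hlog : HasDerivAt (fun t => Real.log (K / t)) (-s⁻¹) s := by
    convert ((hasDerivAt_const s K).fun_div (hasDerivAt_id' s) hs).log (div_ne_zero hK hs)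
      using 1
    field_simp
    ring
  exact hlog.div hf hfs

theorem IsPreconnected.eqOn_neg_one_of_ae_abs_eq_one {X : Type*} [TopologicalSpace X]
    [MeasurableSpace X] {μ : Measure X} [μ.IsOpenPosMeasure] {h : X → ℝ} {U : Set X}
    (hUc : IsPreconnected U) (hU : IsOpen U) (hh : ContinuousOn h U)
    (hae : ∀ᵐ x ∂μ.restrict U, |h x| = 1)
    {x₀ : X} (hx₀ : x₀ ∈ U) (hneg : h x₀ < 0) : EqOn h (fun _ => -1) U := by
  have habs : EqOn (fun x => |h x|) 1 U :=
    Measure.eqOn_open_of_ae_eq hae hU (continuous_abs.comp_continuousOn hh) continuousOn_const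
  refine hUc.eq_of_sq_eq hh continuousOn_const (fun x hx => ?_) (fun _ => by norm_num) hx₀ ?_
  · simp [← sq_abs (h x), habs hx]
  · have := habs hx₀
    simp only [abs_of_neg hneg, Pi.one_apply] at this
    linarith

section

variable {K : ℝ} {v f g : ℝ → ℝ}

theorem eqOn_integral_iff (hK : 0 < K) (hg : ∀ s ∈ Ioi (0 : ℝ), g s = Real.log (K / s) / f s) :
    EqOn g (fun s => ∫ x in s..K, 1 / v x) (Ioi 0) ↔
      ∀ s ∈ Ioi (0 : ℝ), s ≠ K → f s = Real.log (K / s) / ∫ x in s..K, 1 / v x := by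
  constructor
  · intro h s hs hsK
    exact (div_eq_iff_eq_div_of_ne_zero (Real.log_div_ne_zero hK hs hsK)).1
      ((hg s hs).symm.trans (h hs))
  · intro h s hs
    rcases eq_or_ne s K with rfl | hsK
    · simp [hg s hs, div_self (mem_Ioi.1 hs).ne']
    · rw [hg s hs]
      exact (div_eq_iff_eq_div_of_ne_zero (Real.log_div_ne_zero hK hs hsK)).2 (h s hs hsK)

theorem hasDerivAt_integral_one_div (hK : 0 < K) (hv : ContinuousOn v (Ioi 0))
    (hvpos : ∀ s ∈ Ioi (0 : ℝ), 0 < v s) {s : ℝ} (hs : 0 < s) :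
    HasDerivAt (fun t => ∫ x in t..K, 1 / v x) (-(1 / v s)) s :=
  hasDerivAt_integral_left_of_continuousOn_Ioi
    (continuousOn_const.div hv fun x hx => (hvpos x hx).ne') hK hs

theorem deriv_eq_of_eqOn_integral (hK : 0 < K) (hv : ContinuousOn v (Ioi 0))
    (hvpos : ∀ s ∈ Ioi (0 : ℝ), 0 < v s)
    (hgF : EqOn g (fun s => ∫ x in s..K, 1 / v x) (Ioi 0)) {s : ℝ} (hs : 0 < s) :
    deriv g s = -(1 / v s) :=
  ((hasDerivAt_integral_one_div hK hv hvpos hs).congr_of_eventuallyEq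
    (eventually_of_mem (Ioi_mem_nhds hs) hgF)).deriv

theorem eqOn_integral_of_deriv_mul_eq_neg_one (hK : 0 < K) (hv : ContinuousOn v (Ioi 0))
    (hvpos : ∀ s ∈ Ioi (0 : ℝ), 0 < v s) (hg : DifferentiableOn ℝ g (Ioi 0)) (hgK : g K = 0)
    (hd : EqOn (fun s => deriv g s * v s) (fun _ => -1) (Ioi 0)) :
    EqOn g (fun s => ∫ x in s..K, 1 / v x) (Ioi 0) := by
  refine isOpen_Ioi.eqOn_of_deriv_eq isPreconnected_Ioi hg (fun s hs =>
      (hasDerivAt_integral_one_div hK hv hvpos hs).differentiableAt.differentiableWithinAt)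
    (fun s hs => ?_) hK (by simp [hgK])
  have hds : deriv g s * v s = -1 := hd hs
  have := (hvpos s hs).ne'
  rw [(hasDerivAt_integral_one_div hK hv hvpos hs).deriv]
  field_simp
  linarith

section LogDiv

variable (hK : 0 < K) (hfpos : ∀ s ∈ Ioi (0 : ℝ), 0 < f s)
  (hfdiff : DifferentiableOn ℝ f (Ioi 0))
  (hg : ∀ s ∈ Ioi (0 : ℝ), g s = Real.log (K / s) / f s)
include hK hfpos hfdiff hg

theorem hasDerivAt_of_eq_log_div {s : ℝ} (hs : 0 < s) :
    HasDerivAt g ((-s⁻¹ * f s - Real.log (K / s) * deriv f s) / f s ^ 2) s :=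
  (hasDerivAt_log_div_div hK.ne' hs.ne' (hfdiff.differentiableAt (Ioi_mem_nhds hs)).hasDerivAt
    (hfpos s hs).ne').congr_of_eventuallyEq (eventually_of_mem (Ioi_mem_nhds hs) hg)

theorem differentiableOn_of_eq_log_div : DifferentiableOn ℝ g (Ioi 0) := fun _ hs =>
  (hasDerivAt_of_eq_log_div hK hfpos hfdiff hg hs).differentiableAt.differentiableWithinAt

theorem deriv_eq_of_eq_log_div_self : deriv g K = -(K * f K)⁻¹ := by
  rw [(hasDerivAt_of_eq_log_div hK hfpos hfdiff hg hK).deriv, div_self hK.ne', Real.log_one]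
  have := (hfpos K hK).ne'
  field_simp
  ring

theorem continuousOn_deriv_of_eq_log_div
    (hflip : ∀ C : Set ℝ, IsCompact C → C ⊆ Ioi 0 →
      ∃ L : NNReal, LipschitzOnWith L (deriv f) C) :
    ContinuousOn (deriv g) (Ioi 0) := by
  have hf' : ContinuousOn (deriv f) (Ioi 0) :=
    .of_forall_isCompact_lipschitzOnWith isOpen_Ioi hflip
  have : ContinuousOn (fun s => (-s⁻¹ * f s - Real.log (K / s) * deriv f s) / f s ^ 2)
      (Ioi 0) := by
    have hf := hfdiff.continuousOn
    fun_prop (disch := intro x (hx : 0 < x); have := hfpos x hx; positivity)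
  exact this.congr fun s hs => (hasDerivAt_of_eq_log_div hK hfpos hfdiff hg hs).deriv

end LogDiv

end

theorem stmt13 (K : ℝ) (hK : 0 < K) (v f : ℝ → ℝ)
    (hv : ContinuousOn v (Ioi 0)) (hvpos : ∀ s ∈ Ioi (0 : ℝ), 0 < v s)
    (hfpos : ∀ s ∈ Ioi (0 : ℝ), 0 < f s)
    (hfdiff : DifferentiableOn ℝ f (Ioi 0))
    (hflip : ∀ C : Set ℝ, IsCompact C → C ⊆ Ioi 0 →
      ∃ L : NNReal, LipschitzOnWith L (deriv f) C)
    (g : ℝ → ℝ) (hg : ∀ s ∈ Ioi (0 : ℝ), g s = Real.log (K / s) / f s) :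
    ((∀ᵐ s ∂(volume : Measure ℝ).restrict (Ioi 0), |deriv g s * v s| = 1) ∧ g K = 0)
    ↔ ((∀ s ∈ Ioi (0 : ℝ), s ≠ K → f s = Real.log (K / s) / ∫ x in s..K, 1 / v x) ∧
        f K = v K / K) := by
  have hgK : g K = 0 := by simp [hg K hK, div_self hK.ne']
  have hderivK := deriv_eq_of_eq_log_div_self hK hfpos hfdiff hg
  have hfK := hfpos K hK
  rw [← eqOn_integral_iff hK hg]
  constructor
  · rintro ⟨hae, -⟩
    have hneg : EqOn (fun s => deriv g s * v s) (fun _ => -1) (Ioi 0) :=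
      isPreconnected_Ioi.eqOn_neg_one_of_ae_abs_eq_one isOpen_Ioi
        ((continuousOn_deriv_of_eq_log_div hK hfpos hfdiff hg hflip).mul hv) hae hK
        (by rw [hderivK]; exact mul_neg_of_neg_of_pos (neg_neg_of_pos (by positivity)) (hvpos K hK))
    refine ⟨eqOn_integral_of_deriv_mul_eq_neg_one hK hv hvpos
      (differentiableOn_of_eq_log_div hK hfpos hfdiff hg) hgK hneg, ?_⟩
    have hnegK : -(K * f K)⁻¹ * v K = -1 := hderivK ▸ hneg hK
    field_simp at hnegK ⊢
    linarith
  · rintro ⟨hgF, -⟩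
    refine ⟨(ae_restrict_iff' measurableSet_Ioi).2 (ae_of_all _ fun s hs => ?_), hgK⟩
    rw [deriv_eq_of_eqOn_integral hK hv hvpos hgF hs, neg_mul, one_div,
      inv_mul_cancel₀ (hvpos s hs).ne', abs_neg, abs_one]
end

section
/- Let φ : ℝ × [0,∞) → (0,∞) satisfy the hypotheses of the existence lemma, and define the Picard-type iteration g₀(y) = ∫₀^y φ(u,0) du and g_{n+1}(y) = ∫₀^y φ(u, u/g_n(u)) du. Then for all n ≥ 0 and all y ≠ 0: 0 < g₀(y)/y ≤ g_{2n}(y)/y ≤ g_{2n+2}(y)/y ≤ g_{2n+3}(y)/y ≤ g_{2n+1}(y)/y. -/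
open Set MeasureTheory intervalIntegral Function

/-!
Write `g ≼ h` (`SlopeLE g h`) when `g y / y ≤ h y / y` for all `y ≠ 0`. Since `φ` is increasing
in its second argument, `g ≼ h` with `g y / y > 0` gives `u / h u ≤ u / g u` and hence
`Φ[h] ≼ Φ[g]`: the Picard map `Φ` reverses `≼`. Every iterate dominates `g₀` (as
`φ(u, 0) ≤ φ(u, u / g(u))`), and this bounds `u / gₙ(u)` on compact intervals, which makes every
iterate well defined. Applying the order reversal repeatedly to `g₀ ≼ g₁` and `g₀ ≼ g₂` brackets
the increasing even iterates below the decreasing odd ones.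
-/

lemma integral_div_le_integral_div {f g : ℝ → ℝ} {y : ℝ} (hy : y ≠ 0)
    (hf : IntervalIntegrable f volume 0 y) (hg : IntervalIntegrable g volume 0 y)
    (hfg : ∀ u ∈ uIcc 0 y, f u ≤ g u) :
    (∫ u in 0..y, f u) / y ≤ (∫ u in 0..y, g u) / y := by
  rcases hy.lt_or_gt with hy | hy
  · have h : ∫ u in y..0, f u ≤ ∫ u in y..0, g u :=
      integral_mono_on hy.le hf.symm hg.symm fun u hu => hfg u (by rwa [uIcc_of_ge hy.le])
    rw [integral_symm 0 y, integral_symm 0 y] at h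
    rw [div_le_div_right_of_neg hy]
    linarith
  · gcongr
    exact integral_mono_on hy.le hf hg fun u hu => hfg u (by rwa [uIcc_of_le hy.le])

lemma le_integral_div {f : ℝ → ℝ} {y m : ℝ} (hy : y ≠ 0) (hf : IntervalIntegrable f volume 0 y)
    (hm : ∀ u ∈ uIcc 0 y, m ≤ f u) : m ≤ (∫ u in 0..y, f u) / y := by
  simpa [hy] using integral_div_le_integral_div hy intervalIntegrable_const hf hm

lemma exists_pos_le_integral_div {f : ℝ → ℝ} (hf : Continuous f) (hpos : ∀ u, 0 < f u)
    (y : ℝ) : ∃ m > 0, ∀ u ∈ uIcc 0 y, u ≠ 0 → m ≤ (∫ t in 0..u, f t) / u := by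
  obtain ⟨u₀, -, hmin⟩ := isCompact_uIcc.exists_isMinOn nonempty_uIcc hf.continuousOn
  refine ⟨f u₀, hpos u₀, fun u hu hu0 => le_integral_div hu0 (hf.intervalIntegrable 0 u) ?_⟩
  exact fun t ht => hmin (uIcc_subset_uIcc left_mem_uIcc hu ht)

def SlopeLE (g h : ℝ → ℝ) : Prop := ∀ y, y ≠ 0 → g y / y ≤ h y / y

def SlopePos (g : ℝ → ℝ) : Prop := ∀ y, y ≠ 0 → 0 < g y / y

namespace SlopePos

variable {g h : ℝ → ℝ}

lemma mono (hg : SlopePos g) (hgh : SlopeLE g h) : SlopePos h :=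
  fun y hy => (hg y hy).trans_le (hgh y hy)

lemma div_nonneg (hg : SlopePos g) (u : ℝ) : 0 ≤ u / g u := by
  rcases eq_or_ne u 0 with rfl | hu
  · simp
  · rw [← inv_div]
    exact (inv_pos.2 (hg u hu)).le

lemma div_le_div (hg : SlopePos g) (hgh : SlopeLE g h) (u : ℝ) : u / h u ≤ u / g u := by
  rcases eq_or_ne u 0 with rfl | hu
  · simp
  · rw [← inv_div (h u) u, ← inv_div (g u) u]
    exact inv_anti₀ (hg u hu) (hgh u hu)

end SlopePos

noncomputable def picardInit (φ : ℝ → ℝ → ℝ) (y : ℝ) : ℝ := ∫ u in 0..y, φ u 0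

noncomputable def picardStep (φ : ℝ → ℝ → ℝ) (g : ℝ → ℝ) (y : ℝ) : ℝ :=
  ∫ u in 0..y, φ u (u / g u)

section Picard

variable {φ : ℝ → ℝ → ℝ}

lemma monotoneOn_of_deriv_nonneg_right (hφ : DifferentiableOn ℝ (uncurry φ) (univ ×ˢ Ici 0))
    (hderiv : ∀ y z, 0 < z → 0 ≤ deriv (φ y) z) (y : ℝ) : MonotoneOn (φ y) (Ici 0) := by
  have hφy : DifferentiableOn ℝ (φ y) (Ici 0) :=
    hφ.comp ((differentiable_const y).prodMk differentiable_id).differentiableOn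
      fun z hz => ⟨mem_univ y, hz⟩
  refine monotoneOn_of_deriv_nonneg (convex_Ici 0) hφy.continuousOn ?_ ?_ <;> rw [interior_Ici]
  · exact hφy.mono Ioi_subset_Ici_self
  · exact hderiv y

lemma continuous_apply_max_zero (hφ : ContinuousOn (uncurry φ) (univ ×ˢ Ici 0)) :
    Continuous fun p : ℝ × ℝ => φ p.1 (max p.2 0) :=
  hφ.comp_continuous (continuous_fst.prodMk (continuous_snd.max continuous_const))
    fun _ => ⟨mem_univ _, mem_Ici.2 (le_max_right _ _)⟩

lemma continuous_apply_const (hφ : ContinuousOn (uncurry φ) (univ ×ˢ Ici 0)) {z : ℝ}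
    (hz : 0 ≤ z) : Continuous fun u => φ u z :=
  hφ.comp_continuous (continuous_id.prodMk continuous_const) fun _ => ⟨mem_univ _, hz⟩

lemma continuous_picardInit (hφ : ContinuousOn (uncurry φ) (univ ×ˢ Ici 0)) :
    Continuous (picardInit φ) :=
  continuous_primitive (continuous_apply_const hφ le_rfl).intervalIntegrable 0

lemma slopePos_picardInit (hφ : ContinuousOn (uncurry φ) (univ ×ˢ Ici 0))
    (hpos : ∀ u z, 0 ≤ z → 0 < φ u z) : SlopePos (picardInit φ) := fun y hy => by
  obtain ⟨m, hm, hle⟩ :=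
    exists_pos_le_integral_div (continuous_apply_const hφ le_rfl) (fun u => hpos u 0 le_rfl) y
  exact hm.trans_le (hle y right_mem_uIcc hy)

lemma intervalIntegrable_picardIntegrand (hφ : ContinuousOn (uncurry φ) (univ ×ˢ Ici 0))
    (hpos : ∀ u z, 0 ≤ z → 0 < φ u z) (hmon : ∀ u, MonotoneOn (φ u) (Ici 0)) {g : ℝ → ℝ}
    (hg : Measurable g) (hg₀ : SlopeLE (picardInit φ) g) (y : ℝ) :
    IntervalIntegrable (fun u => φ u (u / g u)) volume 0 y := by
  have hgpos : SlopePos g := (slopePos_picardInit hφ hpos).mono hg₀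
  obtain ⟨m, hm, hle⟩ :=
    exists_pos_le_integral_div (continuous_apply_const hφ le_rfl) (fun u => hpos u 0 le_rfl) y
  have hbound : ∀ u ∈ uIcc 0 y, u / g u ≤ m⁻¹ := by
    intro u hu
    rcases eq_or_ne u 0 with rfl | hu0
    · simpa using hm.le
    · rw [← inv_div]
      exact inv_anti₀ hm ((hle u hu hu0).trans (hg₀ u hu0))
  have hmeas : Measurable fun u => φ u (u / g u) := by
    have h := (continuous_apply_max_zero hφ).measurable.comp
      (measurable_id.prodMk (measurable_id.div hg))
    simpa only [comp_def, Pi.div_apply, id, max_eq_left (hgpos.div_nonneg _)] using h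
  refine ((continuous_apply_const hφ (inv_nonneg.2 hm.le)).intervalIntegrable 0 y).mono_fun'
    hmeas.aestronglyMeasurable ((ae_restrict_iff' measurableSet_uIoc).2 (.of_forall ?_))
  intro u hu
  have hnn := hgpos.div_nonneg u
  dsimp only
  rw [Real.norm_of_nonneg (hpos u _ hnn).le]
  exact hmon u hnn (inv_nonneg.2 hm.le) (hbound u (uIoc_subset_uIcc hu))

lemma continuous_picardStep {g : ℝ → ℝ}
    (hint : ∀ y, IntervalIntegrable (fun u => φ u (u / g u)) volume 0 y) :
    Continuous (picardStep φ g) :=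
  continuous_primitive (fun a b => (hint a).symm.trans (hint b)) 0

lemma picardInit_slopeLE_picardStep (hφ : ContinuousOn (uncurry φ) (univ ×ˢ Ici 0))
    (hmon : ∀ u, MonotoneOn (φ u) (Ici 0)) {g : ℝ → ℝ} (hg : SlopePos g)
    (hint : ∀ y, IntervalIntegrable (fun u => φ u (u / g u)) volume 0 y) :
    SlopeLE (picardInit φ) (picardStep φ g) := fun y hy =>
  integral_div_le_integral_div hy ((continuous_apply_const hφ le_rfl).intervalIntegrable 0 y)
    (hint y) fun u _ => hmon u self_mem_Ici (hg.div_nonneg u) (hg.div_nonneg u)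

lemma picardStep_slopeLE_picardStep (hmon : ∀ u, MonotoneOn (φ u) (Ici 0)) {g h : ℝ → ℝ}
    (hg : SlopePos g) (hgh : SlopeLE g h)
    (hint_g : ∀ y, IntervalIntegrable (fun u => φ u (u / g u)) volume 0 y)
    (hint_h : ∀ y, IntervalIntegrable (fun u => φ u (u / h u)) volume 0 y) :
    SlopeLE (picardStep φ h) (picardStep φ g) := fun y hy =>
  integral_div_le_integral_div hy (hint_h y) (hint_g y) fun u _ =>
    hmon u ((hg.mono hgh).div_nonneg u) (hg.div_nonneg u) (hg.div_le_div hgh u)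

end Picard

lemma bracket_of_succ_antitone {r : ℕ → ℕ → Prop} (hzero : ∀ n, r 0 n)
    (hstep : ∀ a b, r a b → r (b + 1) (a + 1)) (n : ℕ) :
    r (2 * n) (2 * n + 2) ∧ r (2 * n + 2) (2 * n + 3) ∧ r (2 * n + 3) (2 * n + 1) := by
  induction n with
  | zero => exact ⟨hzero 2, hstep 2 1 (hstep 0 1 (hzero 1)), hstep 0 2 (hzero 2)⟩
  | succ k ih =>
    obtain ⟨h₁, h₂, h₃⟩ := ih
    have e₁ : r (2 * k + 2) (2 * k + 4) := hstep _ _ h₃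
    have e₂ : r (2 * k + 4) (2 * k + 3) := hstep _ _ h₂
    exact ⟨e₁, hstep _ _ e₂, hstep _ _ e₁⟩

theorem stmt17_general (φ : ℝ → ℝ → ℝ)
    (hC2 : ContDiffOn ℝ 2 (fun p : ℝ × ℝ => φ p.1 p.2) (univ ×ˢ Ici 0))
    (hpos : ∀ y z : ℝ, 0 ≤ z → 0 < φ y z)
    (hmono : ∀ y z : ℝ, 0 ≤ z → 0 ≤ deriv (φ y) z)
    (gs : ℕ → ℝ → ℝ)
    (hgs0 : ∀ y : ℝ, gs 0 y = ∫ u in (0 : ℝ)..y, φ u 0)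
    (hgsS : ∀ (n : ℕ) (y : ℝ), gs (n + 1) y = ∫ u in (0 : ℝ)..y, φ u (u / gs n u)) :
    ∀ (n : ℕ) (y : ℝ), y ≠ 0 →
      0 < gs 0 y / y ∧ gs 0 y / y ≤ gs (2 * n) y / y ∧
      gs (2 * n) y / y ≤ gs (2 * n + 2) y / y ∧
      gs (2 * n + 2) y / y ≤ gs (2 * n + 3) y / y ∧
      gs (2 * n + 3) y / y ≤ gs (2 * n + 1) y / y := by
  have hφ : ContinuousOn (uncurry φ) (univ ×ˢ Ici 0) := hC2.continuousOn
  have hmon := monotoneOn_of_deriv_nonneg_right (hC2.differentiableOn two_ne_zero)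
    fun y z hz => hmono y z hz.le
  have h₀ : gs 0 = picardInit φ := funext hgs0
  have hS (n : ℕ) : gs (n + 1) = picardStep φ (gs n) := funext (hgsS n)
  have hpos₀ : SlopePos (picardInit φ) := slopePos_picardInit hφ hpos
  have hgood (n : ℕ) : Measurable (gs n) ∧ SlopeLE (picardInit φ) (gs n) := by
    induction n with
    | zero => exact ⟨h₀ ▸ (continuous_picardInit hφ).measurable, h₀ ▸ fun _ _ => le_rfl⟩
    | succ k ih =>
      have hint := intervalIntegrable_picardIntegrand hφ hpos hmon ih.1 ih.2
      rw [hS]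
      exact ⟨(continuous_picardStep hint).measurable,
        picardInit_slopeLE_picardStep hφ hmon (hpos₀.mono ih.2) hint⟩
  have hzero (n : ℕ) : SlopeLE (gs 0) (gs n) := h₀ ▸ (hgood n).2
  have hstep (a b : ℕ) (hab : SlopeLE (gs a) (gs b)) : SlopeLE (gs (b + 1)) (gs (a + 1)) := by
    have hint (n : ℕ) := intervalIntegrable_picardIntegrand hφ hpos hmon (hgood n).1 (hgood n).2
    rw [hS, hS]
    exact picardStep_slopeLE_picardStep hmon (hpos₀.mono (hgood a).2) hab (hint a) (hint b)
  intro n y hy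
  obtain ⟨h₁, h₂, h₃⟩ := bracket_of_succ_antitone hzero hstep n
  exact ⟨h₀ ▸ hpos₀ y hy, hzero (2 * n) y hy, h₁ y hy, h₂ y hy, h₃ y hy⟩

theorem stmt17 (φ : ℝ → ℝ → ℝ)
    (hC2 : ContDiffOn ℝ 2 (fun p : ℝ × ℝ => φ p.1 p.2) (univ ×ˢ Ici 0))
    (hpos : ∀ y z : ℝ, 0 ≤ z → 0 < φ y z)
    (hmono : ∀ y z : ℝ, 0 ≤ z → 0 ≤ deriv (φ y) z)
    (hbdd : ∃ C : ℝ, ∀ y z : ℝ, 0 ≤ z → deriv (φ y) z ≤ C)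
    (gs : ℕ → ℝ → ℝ)
    (hgs0 : ∀ y : ℝ, gs 0 y = ∫ u in (0 : ℝ)..y, φ u 0)
    (hgsS : ∀ (n : ℕ) (y : ℝ), gs (n + 1) y = ∫ u in (0 : ℝ)..y, φ u (u / gs n u)) :
    ∀ (n : ℕ) (y : ℝ), y ≠ 0 →
      0 < gs 0 y / y ∧ gs 0 y / y ≤ gs (2 * n) y / y ∧
      gs (2 * n) y / y ≤ gs (2 * n + 2) y / y ∧
      gs (2 * n + 2) y / y ≤ gs (2 * n + 3) y / y ∧
      gs (2 * n + 3) y / y ≤ gs (2 * n + 1) y / y :=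
  stmt17_general φ hC2 hpos hmono gs hgs0 hgsS
end

section
/- Under the hypotheses of the existence lemma, the limits g_e(y) = lim g_{2n}(y) and g_o(y) = lim g_{2n+1}(y) of the even and odd Picard iterates exist, satisfy g_e = Φ[g_o] and g_o = Φ[g_e], and lim_{y→0} g_e(y)/y = lim_{y→0} g_o(y)/y = 1. -/
/-!
Since `φ` is increasing in `z`, the map `Φ` reverses the order of functions bounded below by `g₀`,
so `Φ ∘ Φ` preserves it. From `g₀ ≤ g₁` and `g₀ ≤ g₂` one gets, on `y ≥ 0`, that the even
iterates increase, the odd iterates decrease, and `g_{2n} ≤ g_{2n+1}`. The pointwise limits solve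
the coupled system by dominated convergence: every admissible integrand is bounded on `[0, b]`
because `g ≥ g₀ ≥ m y` there. The slopes of the limits at `0⁺` are squeezed between the slopes
`α_{2n}` and `α_{2n+1}` of the iterates, which both tend to `1`. For `y ≤ 0` apply all of this to
`φ (-y) z` and the reflected iterates `-g_n (-y)`.
-/

open Set Filter Topology MeasureTheory

theorem tendsto_integral_div_nhdsGT_zero {f : ℝ → ℝ} {L : ℝ} (hf : ContinuousOn f (Ioi 0))
    (hL : Tendsto f (𝓝[>] 0) (𝓝 L)) :
    Tendsto (fun y => (∫ u in (0 : ℝ)..y, f u) / y) (𝓝[>] 0) (𝓝 L) := by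
  -- redefining `f 0` as `L` makes `f` right-continuous at `0`, so the FTC applies
  set f' := Function.update f 0 L
  have hff' : EqOn f' f (Ioi 0) := fun x hx => Function.update_of_ne hx.ne' _ _
  have hcont : ContinuousWithinAt f' (Ioi 0) 0 := by
    simpa [ContinuousWithinAt, f'] using
      hL.congr' (eventually_nhdsWithin_of_forall fun x hx => (hff' hx).symm)
  have hderiv : HasDerivWithinAt (fun y => ∫ u in (0 : ℝ)..y, f' u) L (Ioi 0) 0 := by
    simpa [f'] using (intervalIntegral.integral_hasDerivWithinAt_right (s := Ici 0)
      IntervalIntegrable.refl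
      ((hf.congr hff').stronglyMeasurableAtFilter_nhdsWithin measurableSet_Ioi 0)
      hcont).mono Ioi_subset_Ici_self
  rw [hasDerivWithinAt_iff_tendsto_slope' (s := Ioi 0) (lt_irrefl 0)] at hderiv
  refine hderiv.congr' (eventually_nhdsWithin_of_forall fun y (hy : 0 < y) => ?_)
  rw [slope_def_field, intervalIntegral.integral_same, sub_zero, sub_zero,
    intervalIntegral.integral_congr_ae (ae_of_all _ fun x hx => hff' ?_)]
  exact (uIoc_of_le hy.le ▸ hx).1

theorem tendsto_nhdsNE_zero_of_tendsto_comp_neg {f : ℝ → ℝ} {l : Filter ℝ}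
    (hpos : Tendsto f (𝓝[>] 0) l) (hneg : Tendsto (fun y => f (-y)) (𝓝[>] 0) l) :
    Tendsto f (𝓝[≠] 0) l := by
  rw [← nhdsLT_sup_nhdsGT]
  refine tendsto_sup.2 ⟨?_, hpos⟩
  simpa [Function.comp_def] using hneg.comp (tendsto_neg_nhdsLT_neg (a := (0 : ℝ)))

theorem tendsto_of_sandwich_of_tendsto_bounds {α ι β : Type*} [TopologicalSpace β] [LinearOrder β]
    [OrderTopology β] {l : Filter α} {L : Filter ι} {h : α → β} {f g : ι → α → β} {a b : ι → β}
    {c : β} (hf : ∀ i, Tendsto (f i) l (𝓝 (a i))) (hg : ∀ i, Tendsto (g i) l (𝓝 (b i)))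
    (ha : Tendsto a L (𝓝 c)) (hb : Tendsto b L (𝓝 c)) (hfh : ∀ i, f i ≤ᶠ[l] h)
    (hhg : ∀ i, h ≤ᶠ[l] g i) [L.NeBot] : Tendsto h l (𝓝 c) := by
  refine tendsto_order.2 ⟨fun c' hc' => ?_, fun c' hc' => ?_⟩
  · obtain ⟨i, hi⟩ := ((tendsto_order.1 ha).1 c' hc').exists
    filter_upwards [(tendsto_order.1 (hf i)).1 c' hi, hfh i] with x hx hfx
    exact hx.trans_le hfx
  · obtain ⟨i, hi⟩ := ((tendsto_order.1 hb).2 c' hc').exists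
    filter_upwards [(tendsto_order.1 (hg i)).2 c' hi, hhg i] with x hx hgx
    exact hgx.trans_lt hx

theorem le_iterate_le_of_antitoneOn {F : ℝ → ℝ} {c : ℝ} (hc : 0 < c) (hF : AntitoneOn F (Ioi 0))
    (hcF : ∀ x, 0 < x → c ≤ F x) (n : ℕ) : c ≤ F^[n] c ∧ F^[n] c ≤ F c := by
  induction n with
  | zero => exact ⟨le_rfl, hcF c hc⟩
  | succ n ih =>
    rw [Function.iterate_succ_apply']
    exact ⟨hcF _ (hc.trans_le ih.1), hF hc (hc.trans_le ih.1) ih.1⟩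

theorem monotone_iterate_two_mul_of_antitoneOn {F : ℝ → ℝ} {c : ℝ} (hc : 0 < c)
    (hF : AntitoneOn F (Ioi 0)) (hcF : ∀ x, 0 < x → c ≤ F x) :
    Monotone (fun n => F^[2 * n] c) ∧ Antitone (fun n => F^[2 * n + 1] c) := by
  have hpos (n : ℕ) : 0 < F^[n] c := hc.trans_le (le_iterate_le_of_antitoneOn hc hF hcF n).1
  have hFpos {a : ℝ} (ha : 0 < a) : 0 < F a := hc.trans_le (hcF a ha)
  have hsucc (n : ℕ) : F^[n + 1] c = F (F^[n] c) := Function.iterate_succ_apply' F n c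
  have heven (n : ℕ) : F^[2 * n] c ≤ F^[2 * (n + 1)] c := by
    induction n with
    | zero => exact (le_iterate_le_of_antitoneOn hc hF hcF 2).1
    | succ n ih =>
      have h := hF (hFpos (hpos _)) (hFpos (hpos _)) (hF (hpos _) (hpos _) ih)
      simp only [← hsucc] at h
      exact h
  refine ⟨monotone_nat_of_le_succ heven, antitone_nat_of_succ_le fun n => ?_⟩
  show F^[2 * (n + 1) + 1] c ≤ F^[2 * n + 1] c
  rw [hsucc, hsucc]
  exact hF (hpos _) (hpos _) (heven n)

/-- The limits `β`, `γ` of the even and odd iterates satisfy `γ = F β` and `β = F γ`, so both are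
positive fixed points of `F ∘ F`. -/
theorem tendsto_iterate_of_antitoneOn {F : ℝ → ℝ} {c : ℝ} (hc : 0 < c)
    (hF : AntitoneOn F (Ioi 0)) (hFc : ContinuousOn F (Ioi 0)) (hcF : ∀ x, 0 < x → c ≤ F x)
    (hfix : ∀ x, 0 < x → x = F (F x) → x = 1) :
    Tendsto (fun n => F^[2 * n] c) atTop (𝓝 1) ∧
      Tendsto (fun n => F^[2 * n + 1] c) atTop (𝓝 1) := by
  obtain ⟨hmono, hanti⟩ := monotone_iterate_two_mul_of_antitoneOn hc hF hcF
  have hbounds := le_iterate_le_of_antitoneOn hc hF hcF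
  have hβ := tendsto_atTop_ciSup hmono ⟨F c, forall_mem_range.2 fun n => (hbounds _).2⟩
  have hγ := tendsto_atTop_ciInf hanti ⟨c, forall_mem_range.2 fun n => (hbounds _).1⟩
  set β := ⨆ n, F^[2 * n] c
  set γ := ⨅ n, F^[2 * n + 1] c
  have hβpos : 0 < β := hc.trans_le (ge_of_tendsto' hβ fun n => (hbounds _).1)
  have hγpos : 0 < γ := hc.trans_le (ge_of_tendsto' hγ fun n => (hbounds _).1)
  have hFcont {a : ℝ} (ha : 0 < a) : ContinuousAt F a := hFc.continuousAt (Ioi_mem_nhds ha)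
  have hγβ : γ = F β := tendsto_nhds_unique hγ <|
    ((hFcont hβpos).tendsto.comp hβ).congr fun n => (Function.iterate_succ_apply' F _ c).symm
  have hβγ : β = F γ := tendsto_nhds_unique ((tendsto_add_atTop_iff_nat 1).2 hβ) <|
    ((hFcont hγpos).tendsto.comp hγ).congr fun n => (Function.iterate_succ_apply' F _ c).symm
  exact ⟨hfix β hβpos (hγβ ▸ hβγ) ▸ hβ, hfix γ hγpos (hβγ ▸ hγβ) ▸ hγ⟩

structure IsPicardKernel (φ : ℝ → ℝ → ℝ) : Prop where
  continuousOn : ContinuousOn (Function.uncurry φ) (univ ×ˢ Ici 0)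
  pos : ∀ y z, 0 ≤ z → 0 < φ y z
  monotoneOn : ∀ y, MonotoneOn (φ y) (Ici 0)

noncomputable def picardMap (φ : ℝ → ℝ → ℝ) (g : ℝ → ℝ) (y : ℝ) : ℝ :=
  ∫ u in (0 : ℝ)..y, φ u (u / g u)

noncomputable def picardSeq (φ : ℝ → ℝ → ℝ) : ℕ → ℝ → ℝ
  | 0 => fun y => ∫ u in (0 : ℝ)..y, φ u 0
  | n + 1 => picardMap φ (picardSeq φ n)

noncomputable def picardSlope (φ : ℝ → ℝ → ℝ) (n : ℕ) : ℝ :=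
  (fun a => φ 0 (1 / a))^[n] (φ 0 0)

/-- The functions on which `picardMap φ` is well defined and order reversing. -/
structure PicardAdmissible (φ : ℝ → ℝ → ℝ) (g : ℝ → ℝ) : Prop where
  continuousOn : ContinuousOn g (Ioi 0)
  picardSeq_zero_le : ∀ u, 0 ≤ u → picardSeq φ 0 u ≤ g u

section Reflection

variable {φ : ℝ → ℝ → ℝ}

theorem picardMap_comp_neg (g : ℝ → ℝ) (y : ℝ) :
    picardMap (fun x z => φ (-x) z) (fun s => -g (-s)) y = -picardMap φ g (-y) := by
  simp only [picardMap, div_neg, ← neg_div]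
  rw [intervalIntegral.integral_comp_neg (fun v => φ v (v / g v)), neg_zero,
    intervalIntegral.integral_symm]

theorem picardSeq_comp_neg (n : ℕ) (y : ℝ) :
    picardSeq (fun x z => φ (-x) z) n y = -picardSeq φ n (-y) := by
  induction n generalizing y with
  | zero =>
    simp only [picardSeq]
    rw [intervalIntegral.integral_comp_neg (fun v => φ v 0), neg_zero,
      intervalIntegral.integral_symm]
  | succ n ih =>
    simp only [picardSeq]
    rw [show picardSeq (fun x z => φ (-x) z) n = fun s => -picardSeq φ n (-s) from funext ih,
      picardMap_comp_neg]

end Reflection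

namespace IsPicardKernel

variable {φ : ℝ → ℝ → ℝ}

theorem of_contDiffOn (hφ : ContDiffOn ℝ 1 (fun p : ℝ × ℝ => φ p.1 p.2) (univ ×ˢ Ici 0))
    (hpos : ∀ y z : ℝ, 0 ≤ z → 0 < φ y z) (hmono : ∀ y z : ℝ, 0 ≤ z → 0 ≤ deriv (φ y) z) :
    IsPicardKernel φ where
  continuousOn := hφ.continuousOn
  pos := hpos
  monotoneOn y := by
    have hφy : ContDiffOn ℝ 1 (φ y) (Ici 0) :=
      hφ.comp (contDiff_const.prodMk contDiff_id).contDiffOn fun z hz => ⟨mem_univ _, hz⟩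
    refine monotoneOn_of_deriv_nonneg (convex_Ici 0) hφy.continuousOn ?_ ?_ <;> rw [interior_Ici]
    · exact (hφy.differentiableOn one_ne_zero).mono Ioi_subset_Ici_self
    · exact fun z hz => hmono y z (le_of_lt hz)

theorem comp_neg (hφ : IsPicardKernel φ) : IsPicardKernel (fun y z => φ (-y) z) where
  continuousOn := hφ.continuousOn.comp (continuous_neg.prodMap continuous_id).continuousOn
    fun _ hp => ⟨mem_univ _, hp.2⟩
  pos y := hφ.pos (-y)
  monotoneOn y := hφ.monotoneOn (-y)

theorem continuous_left (hφ : IsPicardKernel φ) {z : ℝ} (hz : 0 ≤ z) :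
    Continuous fun y => φ y z :=
  continuousOn_univ.1 <| hφ.continuousOn.comp (continuous_id.prodMk continuous_const).continuousOn
    fun _ _ => ⟨mem_univ _, hz⟩

theorem continuousAt (hφ : IsPicardKernel φ) {y z : ℝ} (hz : 0 < z) :
    ContinuousAt (Function.uncurry φ) (y, z) :=
  hφ.continuousOn.continuousAt (prod_mem_nhds univ_mem (Ici_mem_nhds hz))

theorem picardSeq_zero_nonneg (hφ : IsPicardKernel φ) {y : ℝ} (hy : 0 ≤ y) :
    0 ≤ picardSeq φ 0 y :=
  intervalIntegral.integral_nonneg hy fun u _ => (hφ.pos u 0 le_rfl).le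

theorem exists_mul_le_picardSeq_zero (hφ : IsPicardKernel φ) {b : ℝ} (hb : 0 ≤ b) :
    ∃ m, 0 < m ∧ ∀ u ∈ Icc 0 b, m * u ≤ picardSeq φ 0 u := by
  obtain ⟨u₀, -, hmin⟩ := isCompact_Icc.exists_isMinOn (nonempty_Icc.2 hb)
    (hφ.continuous_left le_rfl).continuousOn
  refine ⟨φ u₀ 0, hφ.pos u₀ 0 le_rfl, fun u hu => ?_⟩
  have := intervalIntegral.integral_mono_on hu.1 (intervalIntegrable_const (μ := volume))
    ((hφ.continuous_left le_rfl).intervalIntegrable 0 u)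
    fun v hv => hmin ⟨hv.1, hv.2.trans hu.2⟩
  simpa [picardSeq, mul_comm] using this

theorem pos_of_picardSeq_zero_le (hφ : IsPicardKernel φ) {g : ℝ → ℝ}
    (hg : ∀ u, 0 ≤ u → picardSeq φ 0 u ≤ g u) {u : ℝ} (hu : 0 < u) : 0 < g u := by
  obtain ⟨m, hm, hmu⟩ := hφ.exists_mul_le_picardSeq_zero hu.le
  exact (mul_pos hm hu).trans_le ((hmu u ⟨hu.le, le_rfl⟩).trans (hg u hu.le))

theorem div_nonneg_of_picardSeq_zero_le (hφ : IsPicardKernel φ) {g : ℝ → ℝ}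
    (hg : ∀ u, 0 ≤ u → picardSeq φ 0 u ≤ g u) {u : ℝ} (hu : 0 ≤ u) : 0 ≤ u / g u :=
  div_nonneg hu ((hφ.picardSeq_zero_nonneg hu).trans (hg u hu))

/-- `g ≥ g₀ ≥ m u` confines `u / g u` to `[0, 1 / m]`. -/
theorem exists_integrand_le (hφ : IsPicardKernel φ) {b : ℝ} (hb : 0 ≤ b) :
    ∃ M, ∀ g : ℝ → ℝ, (∀ u, 0 ≤ u → picardSeq φ 0 u ≤ g u) →
      ∀ u ∈ Icc 0 b, φ u (u / g u) ≤ M := by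
  obtain ⟨m, hm, hmu⟩ := hφ.exists_mul_le_picardSeq_zero hb
  obtain ⟨u₀, -, hmax⟩ := isCompact_Icc.exists_isMaxOn (nonempty_Icc.2 hb)
    (hφ.continuous_left (one_div_pos.2 hm).le).continuousOn
  refine ⟨φ u₀ (1 / m), fun g hg u hu => ?_⟩
  have hratio : u / g u ≤ 1 / m := by
    refine div_le_of_le_mul₀ ((hφ.picardSeq_zero_nonneg hu.1).trans (hg u hu.1))
      (one_div_pos.2 hm).le ?_
    rw [one_div, ← div_eq_inv_mul, le_div_iff₀ hm, mul_comm]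
    exact (hmu u hu).trans (hg u hu.1)
  exact (hφ.monotoneOn u (hφ.div_nonneg_of_picardSeq_zero_le hg hu.1) (one_div_pos.2 hm).le
    hratio).trans (hmax hu)

theorem continuousOn_integrand (hφ : IsPicardKernel φ) {g : ℝ → ℝ} (hg : PicardAdmissible φ g) :
    ContinuousOn (fun u => φ u (u / g u)) (Ioi 0) :=
  hφ.continuousOn.comp (continuousOn_id.prodMk (continuousOn_id.div hg.continuousOn
    fun _ hu => (hφ.pos_of_picardSeq_zero_le hg.picardSeq_zero_le hu).ne'))
    fun _ hu => ⟨mem_univ _, hφ.div_nonneg_of_picardSeq_zero_le hg.picardSeq_zero_le (le_of_lt hu)⟩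

theorem intervalIntegrable_integrand (hφ : IsPicardKernel φ) {g : ℝ → ℝ}
    (hg : PicardAdmissible φ g) {y : ℝ} (hy : 0 ≤ y) :
    IntervalIntegrable (fun u => φ u (u / g u)) volume 0 y := by
  obtain ⟨M, hM⟩ := hφ.exists_integrand_le hy
  refine (intervalIntegrable_iff_integrableOn_Ioc_of_le hy).2 <|
    (integrableOn_const (C := M) measure_Ioc_lt_top.ne).mono'
      (((hφ.continuousOn_integrand hg).mono Ioc_subset_Ioi_self).aestronglyMeasurable
        measurableSet_Ioc) (ae_restrict_of_forall_mem measurableSet_Ioc fun u hu => ?_)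
  rw [Real.norm_of_nonneg (hφ.pos _ _
    (hφ.div_nonneg_of_picardSeq_zero_le hg.picardSeq_zero_le hu.1.le)).le]
  exact hM g hg.picardSeq_zero_le u (Ioc_subset_Icc_self hu)

theorem picardSeq_zero_le_picardMap (hφ : IsPicardKernel φ) {g : ℝ → ℝ}
    (hg : PicardAdmissible φ g) {y : ℝ} (hy : 0 ≤ y) : picardSeq φ 0 y ≤ picardMap φ g y :=
  intervalIntegral.integral_mono_on hy ((hφ.continuous_left le_rfl).intervalIntegrable 0 y)
    (hφ.intervalIntegrable_integrand hg hy) fun u hu =>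
      have hu' := hφ.div_nonneg_of_picardSeq_zero_le hg.picardSeq_zero_le hu.1
      hφ.monotoneOn u self_mem_Ici hu' hu'

theorem picardMap_le_picardMap (hφ : IsPicardKernel φ) {g h : ℝ → ℝ}
    (hg : PicardAdmissible φ g) (hh : PicardAdmissible φ h) (hgh : ∀ u, 0 ≤ u → g u ≤ h u)
    {y : ℝ} (hy : 0 ≤ y) : picardMap φ h y ≤ picardMap φ g y :=
  intervalIntegral.integral_mono_on_of_le_Ioo hy (hφ.intervalIntegrable_integrand hh hy)
    (hφ.intervalIntegrable_integrand hg hy) fun u hu =>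
      hφ.monotoneOn u (hφ.div_nonneg_of_picardSeq_zero_le hh.picardSeq_zero_le hu.1.le)
        (hφ.div_nonneg_of_picardSeq_zero_le hg.picardSeq_zero_le hu.1.le)
        (div_le_div_of_nonneg_left hu.1.le
          (hφ.pos_of_picardSeq_zero_le hg.picardSeq_zero_le hu.1) (hgh u hu.1.le))

theorem picardAdmissible_picardMap (hφ : IsPicardKernel φ) {g : ℝ → ℝ}
    (hg : PicardAdmissible φ g) : PicardAdmissible φ (picardMap φ g) where
  continuousOn y (hy : 0 < y) := by
    have hy' : 0 ≤ y + 1 := by linarith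
    refine ((intervalIntegral.continuousOn_primitive_interval'
      (hφ.intervalIntegrable_integrand hg hy') left_mem_uIcc).continuousAt ?_).continuousWithinAt
    rw [uIcc_of_le hy']
    exact Icc_mem_nhds hy (lt_add_one y)
  picardSeq_zero_le _ := hφ.picardSeq_zero_le_picardMap hg

theorem picardAdmissible_picardSeq (hφ : IsPicardKernel φ) :
    ∀ n, PicardAdmissible φ (picardSeq φ n)
  | 0 => ⟨(intervalIntegral.continuous_primitive
      (fun a b => (hφ.continuous_left le_rfl).intervalIntegrable a b) 0).continuousOn,
      fun _ _ => le_rfl⟩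
  | n + 1 => hφ.picardAdmissible_picardMap (hφ.picardAdmissible_picardSeq n)

theorem tendsto_picardMap (hφ : IsPicardKernel φ) {G : ℕ → ℝ → ℝ} {h : ℝ → ℝ}
    (hG : ∀ n, PicardAdmissible φ (G n)) (hh : ∀ u, 0 ≤ u → picardSeq φ 0 u ≤ h u)
    (hlim : ∀ u, 0 < u → Tendsto (fun n => G n u) atTop (𝓝 (h u))) {y : ℝ} (hy : 0 ≤ y) :
    Tendsto (fun n => picardMap φ (G n) y) atTop (𝓝 (picardMap φ h y)) := by
  obtain ⟨M, hM⟩ := hφ.exists_integrand_le hy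
  refine intervalIntegral.tendsto_integral_filter_of_dominated_convergence (fun _ => M)
    (Eventually.of_forall fun n =>
      (hφ.intervalIntegrable_integrand (hG n) hy).def'.aestronglyMeasurable)
    (Eventually.of_forall fun n => ae_of_all _ fun u hu => ?_) intervalIntegrable_const
    (ae_of_all _ fun u hu => ?_) <;> rw [uIoc_of_le hy] at hu
  · rw [Real.norm_of_nonneg (hφ.pos _ _
      (hφ.div_nonneg_of_picardSeq_zero_le (hG n).picardSeq_zero_le hu.1.le)).le]
    exact hM (G n) (hG n).picardSeq_zero_le u (Ioc_subset_Icc_self hu)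
  · have hhu := hφ.pos_of_picardSeq_zero_le hh hu.1
    exact (hφ.continuousAt (div_pos hu.1 hhu)).tendsto.comp <|
      tendsto_const_nhds.prodMk_nhds (tendsto_const_nhds.div (hlim u hu.1) hhu.ne')

theorem picardSeq_succ_le_succ (hφ : IsPicardKernel φ) {m k : ℕ}
    (h : ∀ y, 0 ≤ y → picardSeq φ m y ≤ picardSeq φ k y) {y : ℝ} (hy : 0 ≤ y) :
    picardSeq φ (k + 1) y ≤ picardSeq φ (m + 1) y :=
  hφ.picardMap_le_picardMap (hφ.picardAdmissible_picardSeq m) (hφ.picardAdmissible_picardSeq k) h hy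

theorem picardSeq_add_two_le_add_two (hφ : IsPicardKernel φ) {m k : ℕ}
    (h : ∀ y, 0 ≤ y → picardSeq φ m y ≤ picardSeq φ k y) {y : ℝ} (hy : 0 ≤ y) :
    picardSeq φ (m + 2) y ≤ picardSeq φ (k + 2) y :=
  hφ.picardSeq_succ_le_succ (fun _ hy => hφ.picardSeq_succ_le_succ h hy) hy

theorem monotone_picardSeq_even (hφ : IsPicardKernel φ) {y : ℝ} (hy : 0 ≤ y) :
    Monotone fun n => picardSeq φ (2 * n) y := by
  refine monotone_nat_of_le_succ fun n => ?_
  induction n generalizing y with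
  | zero => exact (hφ.picardAdmissible_picardSeq 2).picardSeq_zero_le y hy
  | succ n ih => exact hφ.picardSeq_add_two_le_add_two (fun _ hy => ih hy) hy

theorem antitone_picardSeq_odd (hφ : IsPicardKernel φ) {y : ℝ} (hy : 0 ≤ y) :
    Antitone fun n => picardSeq φ (2 * n + 1) y :=
  antitone_nat_of_succ_le fun n =>
    hφ.picardSeq_succ_le_succ (fun _ hy => hφ.monotone_picardSeq_even hy n.le_succ) hy

theorem picardSeq_even_le_odd (hφ : IsPicardKernel φ) (n : ℕ) {y : ℝ} (hy : 0 ≤ y) :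
    picardSeq φ (2 * n) y ≤ picardSeq φ (2 * n + 1) y := by
  induction n generalizing y with
  | zero => exact (hφ.picardAdmissible_picardSeq 1).picardSeq_zero_le y hy
  | succ n ih => exact hφ.picardSeq_add_two_le_add_two (fun _ hy => ih hy) hy

theorem exists_tendsto_picardSeq_of_nonneg (hφ : IsPicardKernel φ) {y : ℝ} (hy : 0 ≤ y) :
    (∃ a, Tendsto (fun n => picardSeq φ (2 * n) y) atTop (𝓝 a)) ∧
      ∃ b, Tendsto (fun n => picardSeq φ (2 * n + 1) y) atTop (𝓝 b) :=
  ⟨⟨_, tendsto_atTop_ciSup (hφ.monotone_picardSeq_even hy) ⟨picardSeq φ 1 y,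
      forall_mem_range.2 fun n =>
        (hφ.picardSeq_even_le_odd n hy).trans (hφ.antitone_picardSeq_odd hy n.zero_le)⟩⟩,
    ⟨_, tendsto_atTop_ciInf (hφ.antitone_picardSeq_odd hy) ⟨picardSeq φ 0 y,
      forall_mem_range.2 fun _ => (hφ.picardAdmissible_picardSeq _).picardSeq_zero_le y hy⟩⟩⟩

theorem exists_tendsto_picardSeq (hφ : IsPicardKernel φ) (y : ℝ) :
    (∃ a, Tendsto (fun n => picardSeq φ (2 * n) y) atTop (𝓝 a)) ∧
      ∃ b, Tendsto (fun n => picardSeq φ (2 * n + 1) y) atTop (𝓝 b) := by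
  rcases le_total 0 y with hy | hy
  · exact hφ.exists_tendsto_picardSeq_of_nonneg hy
  · obtain ⟨⟨a, ha⟩, b, hb⟩ := hφ.comp_neg.exists_tendsto_picardSeq_of_nonneg (neg_nonneg.2 hy)
    simp only [picardSeq_comp_neg, neg_neg] at ha hb
    exact ⟨⟨-a, by simpa using ha.neg⟩, -b, by simpa using hb.neg⟩

theorem picardSeq_even_le_le_le_odd (hφ : IsPicardKernel φ) {y a b : ℝ} (hy : 0 ≤ y)
    (ha : Tendsto (fun n => picardSeq φ (2 * n) y) atTop (𝓝 a))
    (hb : Tendsto (fun n => picardSeq φ (2 * n + 1) y) atTop (𝓝 b)) (n : ℕ) :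
    picardSeq φ (2 * n) y ≤ a ∧ a ≤ b ∧ b ≤ picardSeq φ (2 * n + 1) y :=
  ⟨(hφ.monotone_picardSeq_even hy).ge_of_tendsto ha n,
    le_of_tendsto_of_tendsto' ha hb fun n => hφ.picardSeq_even_le_odd n hy,
    (hφ.antitone_picardSeq_odd hy).le_of_tendsto hb n⟩

theorem picardSlope_pos (hφ : IsPicardKernel φ) (n : ℕ) : 0 < picardSlope φ n := by
  induction n with
  | zero => exact hφ.pos 0 0 le_rfl
  | succ n ih =>
    rw [picardSlope, Function.iterate_succ_apply']
    exact hφ.pos 0 _ (one_div_pos.2 ih).le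

theorem tendsto_picardSeq_div (hφ : IsPicardKernel φ) (n : ℕ) :
    Tendsto (fun y => picardSeq φ n y / y) (𝓝[>] 0) (𝓝 (picardSlope φ n)) := by
  induction n with
  | zero =>
    exact tendsto_integral_div_nhdsGT_zero (hφ.continuous_left le_rfl).continuousOn
      (((hφ.continuous_left le_rfl).tendsto 0).mono_left nhdsWithin_le_nhds)
  | succ n ih =>
    have hratio : Tendsto (fun u => u / picardSeq φ n u) (𝓝[>] 0) (𝓝 (1 / picardSlope φ n)) := by
      simpa only [inv_div, one_div] using ih.inv₀ (hφ.picardSlope_pos n).ne'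
    rw [picardSlope, Function.iterate_succ_apply']
    exact tendsto_integral_div_nhdsGT_zero
      (hφ.continuousOn_integrand (hφ.picardAdmissible_picardSeq n))
      ((hφ.continuousAt (one_div_pos.2 (hφ.picardSlope_pos n))).tendsto.comp
        ((tendsto_id.mono_left nhdsWithin_le_nhds).prodMk_nhds hratio))

theorem tendsto_picardSlope (hφ : IsPicardKernel φ)
    (hfix : ∀ α : ℝ, α > 0 → α = φ 0 (1 / φ 0 (1 / α)) → α = 1) :
    Tendsto (fun n => picardSlope φ (2 * n)) atTop (𝓝 1) ∧
      Tendsto (fun n => picardSlope φ (2 * n + 1)) atTop (𝓝 1) :=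
  tendsto_iterate_of_antitoneOn (hφ.pos 0 0 le_rfl)
    (fun a (ha : 0 < a) b (hb : 0 < b) hab =>
      hφ.monotoneOn 0 (one_div_pos.2 hb).le (one_div_pos.2 ha).le (one_div_le_one_div_of_le ha hab))
    (fun _ ha => ((hφ.continuousAt (one_div_pos.2 ha)).comp (f := fun a : ℝ => ((0 : ℝ), 1 / a))
      (continuousAt_const.prodMk
        (continuousAt_const.div continuousAt_id (ne_of_gt ha)))).continuousWithinAt)
    (fun _ ha => hφ.monotoneOn 0 self_mem_Ici (one_div_pos.2 ha).le (one_div_pos.2 ha).le)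
    hfix

theorem tendsto_div_of_picardSeq_le_le (hφ : IsPicardKernel φ)
    (hfix : ∀ α : ℝ, α > 0 → α = φ 0 (1 / φ 0 (1 / α)) → α = 1) {h : ℝ → ℝ}
    (hh : ∀ y, 0 < y → ∀ n, picardSeq φ (2 * n) y ≤ h y ∧ h y ≤ picardSeq φ (2 * n + 1) y) :
    Tendsto (fun y => h y / y) (𝓝[>] 0) (𝓝 1) :=
  tendsto_of_sandwich_of_tendsto_bounds (fun n => hφ.tendsto_picardSeq_div (2 * n))
    (fun n => hφ.tendsto_picardSeq_div (2 * n + 1)) (hφ.tendsto_picardSlope hfix).1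
    (hφ.tendsto_picardSlope hfix).2
    (fun n => eventually_nhdsWithin_of_forall fun y (hy : 0 < y) =>
      div_le_div_of_nonneg_right (hh y hy n).1 hy.le)
    (fun n => eventually_nhdsWithin_of_forall fun y (hy : 0 < y) =>
      div_le_div_of_nonneg_right (hh y hy n).2 hy.le)

theorem eq_picardMap_and_tendsto_div_of_tendsto (hφ : IsPicardKernel φ)
    (hfix : ∀ α : ℝ, α > 0 → α = φ 0 (1 / φ 0 (1 / α)) → α = 1) {ge go : ℝ → ℝ}
    (hE : ∀ y, 0 ≤ y → Tendsto (fun n => picardSeq φ (2 * n) y) atTop (𝓝 (ge y)))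
    (hO : ∀ y, 0 ≤ y → Tendsto (fun n => picardSeq φ (2 * n + 1) y) atTop (𝓝 (go y))) :
    (∀ y, 0 ≤ y → ge y = picardMap φ go y ∧ go y = picardMap φ ge y) ∧
      Tendsto (fun y => ge y / y) (𝓝[>] 0) (𝓝 1) ∧ Tendsto (fun y => go y / y) (𝓝[>] 0) (𝓝 1) := by
  have hb {y : ℝ} (hy : 0 ≤ y) := hφ.picardSeq_even_le_le_le_odd hy (hE y hy) (hO y hy)
  refine ⟨fun y hy => ⟨tendsto_nhds_unique ((tendsto_add_atTop_iff_nat 1).2 (hE y hy)) ?_,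
      tendsto_nhds_unique (hO y hy) ?_⟩,
    hφ.tendsto_div_of_picardSeq_le_le hfix fun y hy n =>
      ⟨(hb hy.le n).1, (hb hy.le n).2.1.trans (hb hy.le n).2.2⟩,
    hφ.tendsto_div_of_picardSeq_le_le hfix fun y hy n =>
      ⟨(hb hy.le n).1.trans (hb hy.le n).2.1, (hb hy.le n).2.2⟩⟩
  · exact hφ.tendsto_picardMap (fun n => hφ.picardAdmissible_picardSeq (2 * n + 1))
      (fun u hu => (hb hu 0).1.trans (hb hu 0).2.1) (fun u hu => hO u hu.le) hy
  · exact hφ.tendsto_picardMap (fun n => hφ.picardAdmissible_picardSeq (2 * n))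
      (fun u hu => (hb hu 0).1) (fun u hu => hE u hu.le) hy

end IsPicardKernel

theorem stmt18_general (φ : ℝ → ℝ → ℝ)
    (hC2 : ContDiffOn ℝ 2 (fun p : ℝ × ℝ => φ p.1 p.2) (univ ×ˢ Ici 0))
    (hpos : ∀ y z : ℝ, 0 ≤ z → 0 < φ y z)
    (hmono : ∀ y z : ℝ, 0 ≤ z → 0 ≤ deriv (φ y) z)
    (hfix : ∀ α : ℝ, α > 0 → α = φ 0 (1 / φ 0 (1 / α)) → α = 1)
    (gs : ℕ → ℝ → ℝ)
    (hgs0 : ∀ y : ℝ, gs 0 y = ∫ u in (0 : ℝ)..y, φ u 0)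
    (hgsS : ∀ (n : ℕ) (y : ℝ), gs (n + 1) y = ∫ u in (0 : ℝ)..y, φ u (u / gs n u)) :
    ∃ ge go : ℝ → ℝ,
      (∀ y : ℝ, Tendsto (fun n => gs (2 * n) y) atTop (𝓝 (ge y))) ∧
      (∀ y : ℝ, Tendsto (fun n => gs (2 * n + 1) y) atTop (𝓝 (go y))) ∧
      (∀ y : ℝ, ge y = ∫ u in (0 : ℝ)..y, φ u (u / go u)) ∧
      (∀ y : ℝ, go y = ∫ u in (0 : ℝ)..y, φ u (u / ge u)) ∧
      Tendsto (fun y => ge y / y) (𝓝[≠] 0) (𝓝 1) ∧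
      Tendsto (fun y => go y / y) (𝓝[≠] 0) (𝓝 1) := by
  have hφ := IsPicardKernel.of_contDiffOn (hC2.of_le one_le_two) hpos hmono
  obtain rfl : gs = picardSeq φ := by
    funext n
    induction n with
    | zero => exact funext hgs0
    | succ n ih => exact funext fun y => (hgsS n y).trans (by rw [ih]; rfl)
  choose ge hge using fun y => (hφ.exists_tendsto_picardSeq y).1
  choose go hgo using fun y => (hφ.exists_tendsto_picardSeq y).2
  obtain ⟨hsol, hge_div, hgo_div⟩ :=
    hφ.eq_picardMap_and_tendsto_div_of_tendsto hfix (fun y _ => hge y) (fun y _ => hgo y)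
  -- the same for the reflected kernel `φ (-y) z`, whose iterates are `-gₙ (-y)`
  obtain ⟨hsol', hge_div', hgo_div'⟩ :=
    hφ.comp_neg.eq_picardMap_and_tendsto_div_of_tendsto (by simpa using hfix)
      (ge := fun y => -ge (-y)) (go := fun y => -go (-y))
      (fun y _ => by simpa [picardSeq_comp_neg] using (hge (-y)).neg)
      (fun y _ => by simpa [picardSeq_comp_neg] using (hgo (-y)).neg)
  have hsol_all (y : ℝ) : ge y = picardMap φ go y ∧ go y = picardMap φ ge y := by
    rcases le_total 0 y with hy | hy
    · exact hsol y hy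
    · simpa [picardMap_comp_neg] using hsol' (-y) (neg_nonneg.2 hy)
  refine ⟨ge, go, hge, hgo, fun y => (hsol_all y).1, fun y => (hsol_all y).2,
    tendsto_nhdsNE_zero_of_tendsto_comp_neg hge_div (by simpa [neg_div, div_neg] using hge_div'),
    tendsto_nhdsNE_zero_of_tendsto_comp_neg hgo_div (by simpa [neg_div, div_neg] using hgo_div')⟩

theorem stmt18 (φ : ℝ → ℝ → ℝ)
    (hC2 : ContDiffOn ℝ 2 (fun p : ℝ × ℝ => φ p.1 p.2) (univ ×ˢ Ici 0))
    (hpos : ∀ y z : ℝ, 0 ≤ z → 0 < φ y z)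
    (hmono : ∀ y z : ℝ, 0 ≤ z → 0 ≤ deriv (φ y) z)
    (hbdd : ∃ C : ℝ, ∀ y z : ℝ, 0 ≤ z → deriv (φ y) z ≤ C)
    (hnorm : φ 0 1 = 1)
    (hfix : ∀ α : ℝ, α > 0 → α = φ 0 (1 / φ 0 (1 / α)) → α = 1)
    (gs : ℕ → ℝ → ℝ)
    (hgs0 : ∀ y : ℝ, gs 0 y = ∫ u in (0 : ℝ)..y, φ u 0)
    (hgsS : ∀ (n : ℕ) (y : ℝ), gs (n + 1) y = ∫ u in (0 : ℝ)..y, φ u (u / gs n u)) :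
    ∃ ge go : ℝ → ℝ,
      (∀ y : ℝ, Tendsto (fun n => gs (2 * n) y) atTop (𝓝 (ge y))) ∧
      (∀ y : ℝ, Tendsto (fun n => gs (2 * n + 1) y) atTop (𝓝 (go y))) ∧
      (∀ y : ℝ, ge y = ∫ u in (0 : ℝ)..y, φ u (u / go u)) ∧
      (∀ y : ℝ, go y = ∫ u in (0 : ℝ)..y, φ u (u / ge u)) ∧
      Tendsto (fun y => ge y / y) (𝓝[≠] 0) (𝓝 1) ∧
      Tendsto (fun y => go y / y) (𝓝[≠] 0) (𝓝 1) :=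
  stmt18_general φ hC2 hpos hmono hfix gs hgs0 hgsS
end

section
/- Let β = φ_y(0,1)/(1 + φ_z(0,1)/2) where φ satisfies the hypotheses of the existence lemma, and let g be the unique solution of g' = φ(y, y/g(y)), g(0)=0. Then sup_{0<|y|≤a} |g(y)/y − (1 + βy/2)| = O(a²) as a → 0. -/
/-!
Let `w y = g y / y - (1 + β y / 2)` and `A = ∂_z φ (0, 1) ≥ 0`. By the ODE, `y w' + (1 + A) w` is
the first-order Taylor remainder of `φ` at `(0, 1)`, evaluated at `(y, y / g y)`, plus
`A (g y / y - 1)² / (g y / y)`; the value of `β` is exactly what cancels the term linear in `y`.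
Hence `y w' + c w = O(y² + w²)` with `c = 1 + A > 0`, and as `w → 0` the quadratic term is
absorbed: `|y w' + c w| ≤ K y² + (c / 2) |w|`. With the integrating factor `y ^ c`, comparing
`y ^ c w` with `y ^ c (K y² / (c + 2) + M / 2)`, where `M` is the supremum of `|w|` on `(0, a]`,
gives `M ≤ K a² / (c + 2) + M / 2`, i.e. `|w| ≤ 2 K a² / (c + 2)`. Negative `y` are handled by
the reflection `y ↦ -y`.
-/

open Set Filter Topology Asymptotics

theorem ContDiffAt.isBigO_sub_sub_fderiv {E F : Type*} [NormedAddCommGroup E] [NormedSpace ℝ E]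
    [NormedAddCommGroup F] [NormedSpace ℝ F] {f : E → F} {p : E} (hf : ContDiffAt ℝ 2 f p) :
    (fun x => f x - f p - fderiv ℝ f p (x - p)) =O[𝓝 p] fun x => ‖x - p‖ ^ 2 := by
  obtain ⟨L, t, ht, hLip⟩ := (hf.fderiv_right (m := 1) (by norm_num)).exists_lipschitzOnWith
  have hdiff : ∀ᶠ q in 𝓝 p, DifferentiableAt ℝ f q :=
    (hf.eventually (by simp)).mono fun q hq => hq.differentiableAt (by norm_num)
  obtain ⟨r, hr, hball⟩ := Metric.mem_nhds_iff.mp (inter_mem ht hdiff)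
  refine IsBigO.of_bound L ?_
  filter_upwards [Metric.ball_mem_nhds p hr] with x hx
  rw [Metric.mem_ball, dist_eq_norm] at hx
  have hsub : Metric.closedBall p ‖x - p‖ ⊆ t ∩ {q | DifferentiableAt ℝ f q} :=
    (Metric.closedBall_subset_ball hx).trans hball
  have hp : p ∈ Metric.closedBall p ‖x - p‖ := Metric.mem_closedBall_self (norm_nonneg _)
  have hbound : ∀ q ∈ Metric.closedBall p ‖x - p‖, ‖fderiv ℝ f q - fderiv ℝ f p‖ ≤ L * ‖x - p‖ := by
    intro q hq
    calc ‖fderiv ℝ f q - fderiv ℝ f p‖ ≤ L * ‖q - p‖ := by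
          rw [← dist_eq_norm, ← dist_eq_norm]
          exact hLip.dist_le_mul q (hsub hq).1 p (hsub hp).1
      _ ≤ L * ‖x - p‖ := by gcongr; rwa [← dist_eq_norm]
  calc ‖f x - f p - fderiv ℝ f p (x - p)‖ ≤ L * ‖x - p‖ * ‖x - p‖ :=
        (convex_closedBall p ‖x - p‖).norm_image_sub_le_of_norm_fderiv_le'
          (fun q hq => (hsub hq).2) hbound hp (by simp [dist_eq_norm])
    _ = L * ‖‖x - p‖ ^ 2‖ := by rw [norm_pow, norm_norm, sq, mul_assoc]

theorem fderiv_apply_eq_partial_derivs {f : ℝ × ℝ → ℝ} {p : ℝ × ℝ} (hf : DifferentiableAt ℝ f p)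
    (a b : ℝ) :
    fderiv ℝ f p (a, b) =
      deriv (fun x => f (x, p.2)) p.1 * a + deriv (fun y => f (p.1, y)) p.2 * b := by
  have h₁ : HasDerivAt (fun x => f (x, p.2)) (fderiv ℝ f p (1, 0)) p.1 :=
    hf.hasFDerivAt.comp_hasDerivAt p.1 ((hasDerivAt_id _).prodMk (hasDerivAt_const _ _))
  have h₂ : HasDerivAt (fun y => f (p.1, y)) (fderiv ℝ f p (0, 1)) p.2 :=
    hf.hasFDerivAt.comp_hasDerivAt p.2 ((hasDerivAt_const _ _).prodMk (hasDerivAt_id _))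
  rw [h₁.deriv, h₂.deriv, show ((a, b) : ℝ × ℝ) = a • (1, 0) + b • (0, 1) by simp,
    map_add, map_smul, map_smul, smul_eq_mul, smul_eq_mul, mul_comm a, mul_comm b]

theorem ContDiffAt.isBigO_sub_sub_partial_derivs {f : ℝ × ℝ → ℝ} {p : ℝ × ℝ}
    (hf : ContDiffAt ℝ 2 f p) :
    (fun q => f q - f p - deriv (fun x => f (x, p.2)) p.1 * (q.1 - p.1)
        - deriv (fun y => f (p.1, y)) p.2 * (q.2 - p.2))
      =O[𝓝 p] fun q => (q.1 - p.1) ^ 2 + (q.2 - p.2) ^ 2 := by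
  refine (hf.isBigO_sub_sub_fderiv.congr_left fun q => ?_).trans
    (IsBigO.of_bound' (Eventually.of_forall fun q => ?_))
  · rw [show q - p = (q.1 - p.1, q.2 - p.2) from rfl,
      fderiv_apply_eq_partial_derivs (hf.differentiableAt (by norm_num))]
    ring
  · rw [norm_pow, norm_norm, Real.norm_eq_abs, abs_of_nonneg (by positivity), Prod.norm_def,
      Prod.fst_sub, Prod.snd_sub, Real.norm_eq_abs, Real.norm_eq_abs]
    rcases le_total |q.1 - p.1| |q.2 - p.2| with h | h
    · rw [max_eq_right h, sq_abs]; nlinarith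
    · rw [max_eq_left h, sq_abs]; nlinarith

theorem abs_sub_le_sub_of_abs_deriv_le {F B F' B' : ℝ → ℝ} {a b : ℝ} (hab : a ≤ b)
    (hF : ContinuousOn F (Icc a b)) (hB : ContinuousOn B (Icc a b))
    (hF' : ∀ t ∈ Ioo a b, HasDerivAt F (F' t) t) (hB' : ∀ t ∈ Ioo a b, HasDerivAt B (B' t) t)
    (hle : ∀ t ∈ Ioo a b, |F' t| ≤ B' t) : |F b - F a| ≤ B b - B a := by
  have hmono : ∀ s : ℝ, |s| = 1 → B a - s * F a ≤ B b - s * F b := by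
    intro s hs
    refine monotoneOn_of_hasDerivWithinAt_nonneg (convex_Icc a b) (f' := fun t => B' t - s * F' t)
      (hB.sub (continuousOn_const.mul hF)) (fun t ht => ?_) (fun t ht => ?_)
      (left_mem_Icc.mpr hab) (right_mem_Icc.mpr hab) hab
    · rw [interior_Icc] at ht
      exact ((hB' t ht).sub ((hF' t ht).const_mul s)).hasDerivWithinAt
    · rw [interior_Icc] at ht
      have : s * F' t ≤ B' t := (le_abs_self _).trans (by rw [abs_mul, hs, one_mul]; exact hle t ht)
      exact sub_nonneg.mpr this
  have h₁ := hmono 1 abs_one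
  have h₂ := hmono (-1) (by simp)
  rw [abs_sub_le_iff]
  constructor <;> linarith

theorem continuousOn_Icc_rpow_mul_of_abs_le {w : ℝ → ℝ} {c Q a : ℝ} (hc : 0 < c)
    (hw : ∀ t ∈ Ioc 0 a, ContinuousAt w t) (hQ : ∀ t ∈ Ioc 0 a, |w t| ≤ Q) :
    ContinuousOn (fun t => t ^ c * w t) (Icc 0 a) := by
  intro t ht
  rcases ht.1.eq_or_lt with rfl | ht₀
  · have hle : ∀ s ∈ Icc 0 a, ‖s ^ c * w s‖ ≤ Q * s ^ c := by
      intro s hs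
      rcases hs.1.eq_or_lt with rfl | hs₀
      · simp [Real.zero_rpow hc.ne']
      · rw [Real.norm_eq_abs, abs_mul, abs_of_nonneg (Real.rpow_nonneg hs.1 c), mul_comm]
        exact mul_le_mul_of_nonneg_right (hQ s ⟨hs₀, hs.2⟩) (Real.rpow_nonneg hs.1 c)
    rw [ContinuousWithinAt, Real.zero_rpow hc.ne', zero_mul]
    refine squeeze_zero_norm' (eventually_nhdsWithin_of_forall hle) ?_
    simpa [Real.zero_rpow hc.ne'] using
      ((Real.continuous_rpow_const hc.le).const_mul Q).tendsto 0 |>.mono_left nhdsWithin_le_nhds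
  · exact ((Real.continuousAt_rpow_const t c (Or.inl ht₀.ne')).mul
      (hw t ⟨ht₀, ht.2⟩)).continuousWithinAt

theorem abs_le_of_abs_mul_deriv_add_le {w : ℝ → ℝ} {c K Q a : ℝ} (hc : 0 < c) (ha : 0 < a)
    (hw : ∀ t ∈ Ioc 0 a, DifferentiableAt ℝ w t)
    (hineq : ∀ t ∈ Ioc 0 a, |t * deriv w t + c * w t| ≤ K * t ^ 2 + c / 2 * |w t|)
    (hQ : ∀ t ∈ Ioc 0 a, |w t| ≤ Q) : |w a| ≤ K * a ^ 2 / (c + 2) + Q / 2 := by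
  set F : ℝ → ℝ := fun t => t ^ c * w t
  set B : ℝ → ℝ := fun t => t ^ c * (K * t ^ 2 / (c + 2) + Q / 2)
  have hpow : ∀ t : ℝ, 0 < t → HasDerivAt (fun t : ℝ => t ^ c) (c * t ^ (c - 1)) t :=
    fun t ht => Real.hasDerivAt_rpow_const (Or.inl ht.ne')
  have hpow_eq : ∀ t : ℝ, 0 < t → t ^ c = t ^ (c - 1) * t := fun t ht => by
    rw [Real.rpow_sub_one ht.ne', div_mul_cancel₀ _ ht.ne']
  have hF' : ∀ t ∈ Ioc 0 a, HasDerivAt F (t ^ (c - 1) * (t * deriv w t + c * w t)) t := by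
    intro t ht
    refine ((hpow t ht.1).mul (hw t ht).hasDerivAt).congr_deriv ?_
    rw [hpow_eq t ht.1]; ring
  have hB' : ∀ t : ℝ, 0 < t → HasDerivAt B (t ^ (c - 1) * (K * t ^ 2 + c / 2 * Q)) t := by
    intro t ht
    refine ((hpow t ht).mul
      ((((hasDerivAt_pow 2 t).const_mul K).div_const (c + 2)).add_const (Q / 2))).congr_deriv ?_
    rw [hpow_eq t ht]; field_simp; ring
  have hF : ContinuousOn F (Icc 0 a) :=
    continuousOn_Icc_rpow_mul_of_abs_le hc (fun t ht => (hw t ht).continuousAt) hQ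
  have hB : ContinuousOn B (Icc 0 a) :=
    ((Real.continuous_rpow_const hc.le).mul (by fun_prop)).continuousOn
  have hcmp := abs_sub_le_sub_of_abs_deriv_le ha.le hF hB
    (fun t ht => hF' t (Ioo_subset_Ioc_self ht)) (fun t ht => hB' t ht.1) (fun t ht => by
      have ht' := Ioo_subset_Ioc_self ht
      have hpos := Real.rpow_nonneg ht.1.le (c - 1)
      rw [abs_mul, abs_of_nonneg hpos]
      gcongr
      exact (hineq t ht').trans (by gcongr; exact hQ t ht'))
  have hapos : 0 < a ^ c := Real.rpow_pos_of_pos ha c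
  simp only [F, B, Real.zero_rpow hc.ne', zero_mul, sub_zero, abs_mul, abs_of_pos hapos] at hcmp
  exact le_of_mul_le_mul_left hcmp hapos

theorem abs_le_sq_of_abs_mul_deriv_add_le {w : ℝ → ℝ} {c K Q δ : ℝ} (hc : 0 < c) (hK : 0 ≤ K)
    (hw : ∀ t ∈ Ioc 0 δ, DifferentiableAt ℝ w t)
    (hineq : ∀ t ∈ Ioc 0 δ, |t * deriv w t + c * w t| ≤ K * t ^ 2 + c / 2 * |w t|)
    (hQ : ∀ t ∈ Ioc 0 δ, |w t| ≤ Q) {a : ℝ} (ha : a ∈ Ioc 0 δ) :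
    |w a| ≤ 2 * K / (c + 2) * a ^ 2 := by
  have hsub : Ioc 0 a ⊆ Ioc 0 δ := Ioc_subset_Ioc_right ha.2
  set M := sSup ((fun t => |w t|) '' Ioc 0 a)
  have hne : ((fun t => |w t|) '' Ioc 0 a).Nonempty := ⟨_, mem_image_of_mem _ ⟨ha.1, le_rfl⟩⟩
  have hbdd : BddAbove ((fun t => |w t|) '' Ioc 0 a) :=
    ⟨Q, forall_mem_image.mpr fun t ht => hQ t (hsub ht)⟩
  have hle_M : ∀ t ∈ Ioc 0 a, |w t| ≤ M := fun t ht => le_csSup hbdd (mem_image_of_mem _ ht)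
  have hM : M ≤ K * a ^ 2 / (c + 2) + M / 2 := by
    refine csSup_le hne (forall_mem_image.mpr fun t ht => ?_)
    have hsub' : Ioc 0 t ⊆ Ioc 0 a := Ioc_subset_Ioc_right ht.2
    calc |w t| ≤ K * t ^ 2 / (c + 2) + M / 2 :=
          abs_le_of_abs_mul_deriv_add_le hc ht.1 (fun s hs => hw s (hsub (hsub' hs)))
            (fun s hs => hineq s (hsub (hsub' hs))) (fun s hs => hle_M s (hsub' hs))
      _ ≤ K * a ^ 2 / (c + 2) + M / 2 := by gcongr; exacts [ht.1.le, ht.2]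
  calc |w a| ≤ M := hle_M a ⟨ha.1, le_rfl⟩
    _ ≤ 2 * (K * a ^ 2 / (c + 2)) := by linarith
    _ = 2 * K / (c + 2) * a ^ 2 := by ring

theorem isBigO_sq_nhdsGT_of_mul_deriv_add {w : ℝ → ℝ} {c : ℝ} (hc : 0 < c)
    (hw : Tendsto w (𝓝[>] 0) (𝓝 0)) (hdiff : ∀ᶠ t in 𝓝[>] 0, DifferentiableAt ℝ w t)
    (hR : (fun t => t * deriv w t + c * w t) =O[𝓝[>] 0] fun t => t ^ 2 + w t ^ 2) :
    w =O[𝓝[>] 0] fun t => t ^ 2 := by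
  obtain ⟨K, hK, hKR⟩ := hR.exists_pos
  have hsmall : ∀ᶠ t in 𝓝[>] 0, |w t| ≤ c / (2 * K) :=
    (hw.eventually (Metric.closedBall_mem_nhds 0 (show 0 < c / (2 * K) by positivity))).mono
      fun t ht => by simpa using ht
  obtain ⟨δ, hδ, hδsub⟩ := mem_nhdsGT_iff_exists_Ioc_subset.mp (hdiff.and (hsmall.and hKR.bound))
  have hineq : ∀ t ∈ Ioc 0 δ, |t * deriv w t + c * w t| ≤ K * t ^ 2 + c / 2 * |w t| := by
    intro t ht
    obtain ⟨-, hwt, hRt⟩ := hδsub ht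
    have hsq : K * w t ^ 2 ≤ c / 2 * |w t| := by
      rw [← sq_abs, sq, ← mul_assoc]
      refine mul_le_mul_of_nonneg_right ?_ (abs_nonneg _)
      calc K * |w t| ≤ K * (c / (2 * K)) := by gcongr
        _ = c / 2 := by field_simp
    have hnn : 0 ≤ t ^ 2 + w t ^ 2 := by positivity
    rw [Real.norm_eq_abs, Real.norm_eq_abs, abs_of_nonneg hnn] at hRt
    linarith
  refine IsBigO.of_bound (2 * K / (c + 2)) ?_
  filter_upwards [Ioc_mem_nhdsGT hδ] with t ht
  rw [Real.norm_eq_abs, Real.norm_eq_abs, abs_of_nonneg (sq_nonneg t)]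
  exact abs_le_sq_of_abs_mul_deriv_add_le hc hK.le (fun s hs => (hδsub hs).1) hineq
    (fun s hs => (hδsub hs).2.1) ht

theorem isBigO_sq_nhdsNE_of_mul_deriv_add {w : ℝ → ℝ} {c : ℝ} (hc : 0 < c)
    (hw : Tendsto w (𝓝[≠] 0) (𝓝 0)) (hdiff : ∀ᶠ t in 𝓝[≠] 0, DifferentiableAt ℝ w t)
    (hR : (fun t => t * deriv w t + c * w t) =O[𝓝[≠] 0] fun t => t ^ 2 + w t ^ 2) :
    w =O[𝓝[≠] 0] fun t => t ^ 2 := by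
  have hpos := nhdsGT_le_nhdsNE (0 : ℝ)
  have hneg : Tendsto Neg.neg (𝓝[>] (0 : ℝ)) (𝓝[≠] 0) := by
    simpa using (tendsto_neg_nhdsGT_neg (a := (0 : ℝ))).mono_right (nhdsLT_le_nhdsNE 0)
  have hreflect : (fun t => w (-t)) =O[𝓝[>] 0] fun t => t ^ 2 := by
    refine isBigO_sq_nhdsGT_of_mul_deriv_add hc (hw.comp hneg)
      ((hneg.eventually hdiff).mono fun t ht => ht.comp t (hasDerivAt_neg t).differentiableAt) ?_
    simpa [Function.comp_def, deriv_comp_neg] using hR.comp_tendsto hneg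
  rw [← nhdsLT_sup_nhdsGT]
  refine IsBigO.sup ?_ (isBigO_sq_nhdsGT_of_mul_deriv_add hc (hw.mono_left hpos)
    (hdiff.filter_mono hpos) (hR.mono hpos))
  simpa [Function.comp_def] using hreflect.comp_tendsto (tendsto_neg_nhdsLT_neg (a := (0 : ℝ)))

theorem HasDerivAt.tendsto_div_self_nhdsNE {g : ℝ → ℝ} {g' : ℝ} (hg : HasDerivAt g g' 0)
    (hg0 : g 0 = 0) : Tendsto (fun y => g y / y) (𝓝[≠] 0) (𝓝 g') := by
  simpa [hg0, div_eq_inv_mul] using hasDerivAt_iff_tendsto_slope_zero.mp hg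

theorem sq_inv_sub_one_le {q : ℝ} (hq : 1 / 2 ≤ q) : (q⁻¹ - 1) ^ 2 ≤ 4 * (q - 1) ^ 2 := by
  have hq₀ : 0 < q := by linarith
  have hinv : q⁻¹ ≤ 2 := inv_le_of_inv_le₀ (by norm_num) (by linarith)
  have hsq : (q⁻¹ - 1) ^ 2 = (q - 1) ^ 2 * q⁻¹ ^ 2 := by field_simp; ring
  rw [hsq, mul_comm 4]
  gcongr
  nlinarith [inv_pos.mpr hq₀]

theorem mul_deriv_add_eq_of_ode {φ : ℝ → ℝ → ℝ} {g : ℝ → ℝ} {A β y : ℝ}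
    (hg : DifferentiableAt ℝ g y) (hy : y ≠ 0) (hgy : g y ≠ 0)
    (hode : deriv g y = φ y (y / g y)) :
    y * deriv (fun y => g y / y - (1 + β * y / 2)) y + (1 + A) * (g y / y - (1 + β * y / 2))
      = (φ y (y / g y) - 1 - β * (2 + A) / 2 * y - A * (y / g y - 1))
        + A * (g y / y - 1) ^ 2 / (g y / y) := by
  have hderiv : HasDerivAt (fun y => g y / y - (1 + β * y / 2))
      ((deriv g y * y - g y) / y ^ 2 - β / 2) y :=
    ((hg.hasDerivAt.div (hasDerivAt_id' y) hy).sub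
      ((((hasDerivAt_id' y).const_mul β).div_const 2).const_add 1)).congr_deriv (by ring)
  rw [hderiv.deriv, hode]
  field_simp
  ring

theorem mul_deriv_add_isBigO_of_ode {φ : ℝ → ℝ → ℝ} {g : ℝ → ℝ} {A β : ℝ}
    (hT : (fun p : ℝ × ℝ => φ p.1 p.2 - 1 - β * (2 + A) / 2 * p.1 - A * (p.2 - 1))
      =O[𝓝 (0, 1)] fun p => p.1 ^ 2 + (p.2 - 1) ^ 2)
    (hg : Differentiable ℝ g) (hq : Tendsto (fun y => g y / y) (𝓝[≠] 0) (𝓝 1))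
    (hode : ∀ y, y ≠ 0 → deriv g y = φ y (y / g y)) :
    (fun y => y * deriv (fun y => g y / y - (1 + β * y / 2)) y
        + (1 + A) * (g y / y - (1 + β * y / 2)))
      =O[𝓝[≠] 0] fun y => y ^ 2 + (g y / y - (1 + β * y / 2)) ^ 2 := by
  have hz : Tendsto (fun y => y / g y) (𝓝[≠] 0) (𝓝 1) := by
    simpa [inv_div] using hq.inv₀ one_ne_zero
  have hE := hT.comp_tendsto ((tendsto_id.mono_left nhdsWithin_le_nhds).prodMk_nhds hz)
  have hnear : ∀ᶠ y in 𝓝[≠] 0, y ≠ 0 ∧ 1 / 2 ≤ g y / y :=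
    eventually_mem_nhdsWithin.and (hq.eventually (eventually_ge_nhds (by norm_num)))
  have hrecip : (fun y => y ^ 2 + (y / g y - 1) ^ 2) =O[𝓝[≠] 0]
      fun y => y ^ 2 + (g y / y - 1) ^ 2 := by
    refine IsBigO.of_bound 4 (hnear.mono fun y ⟨_, hq⟩ => ?_)
    rw [← inv_div, Real.norm_of_nonneg (by positivity), Real.norm_of_nonneg (by positivity)]
    nlinarith [sq_inv_sub_one_le hq, sq_nonneg y]
  have hquad : (fun y => A * (g y / y - 1) ^ 2 / (g y / y)) =O[𝓝[≠] 0]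
      fun y => y ^ 2 + (g y / y - 1) ^ 2 := by
    refine IsBigO.of_bound (2 * |A|) (hnear.mono fun y ⟨_, hq⟩ => ?_)
    generalize g y / y = q at hq ⊢
    have hq₀ : 0 < q := by linarith
    rw [Real.norm_eq_abs, abs_div, abs_mul, abs_of_pos hq₀, abs_of_nonneg (sq_nonneg (q - 1)),
      Real.norm_of_nonneg (by positivity), div_le_iff₀ hq₀]
    nlinarith [mul_nonneg (abs_nonneg A) (sq_nonneg y),
      mul_nonneg (abs_nonneg A) (sq_nonneg (q - 1))]
  have hdev : (fun y => y ^ 2 + (g y / y - 1) ^ 2) =O[𝓝[≠] 0]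
      fun y => y ^ 2 + (g y / y - (1 + β * y / 2)) ^ 2 := by
    refine IsBigO.of_bound (2 + β ^ 2) (Eventually.of_forall fun y => ?_)
    generalize g y / y = q
    rw [Real.norm_of_nonneg (by positivity), Real.norm_of_nonneg (by positivity)]
    nlinarith [sq_nonneg (q - (1 + β * y / 2) - β * y / 2), sq_nonneg (β * y),
      mul_nonneg (sq_nonneg β) (sq_nonneg (q - (1 + β * y / 2)))]
  have hid : (fun y => y * deriv (fun y => g y / y - (1 + β * y / 2)) y
        + (1 + A) * (g y / y - (1 + β * y / 2))) =ᶠ[𝓝[≠] 0]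
      fun y => (φ y (y / g y) - 1 - β * (2 + A) / 2 * y - A * (y / g y - 1))
        + A * (g y / y - 1) ^ 2 / (g y / y) := by
    filter_upwards [hnear] with y ⟨hy, hq⟩
    refine mul_deriv_add_eq_of_ode (hg y) hy (fun h => ?_) (hode y hy)
    rw [h, zero_div] at hq
    norm_num at hq
  exact (((hE.trans hrecip).add hquad).congr' hid.symm EventuallyEq.rfl).trans hdev

theorem exists_abs_le_mul_sq_of_isBigO {w : ℝ → ℝ} (hw : w =O[𝓝[≠] 0] fun t => t ^ 2) :
    ∃ C > (0 : ℝ), ∃ δ > (0 : ℝ), ∀ a : ℝ, 0 < a → a ≤ δ →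
      ∀ y : ℝ, y ≠ 0 → |y| ≤ a → |w y| ≤ C * a ^ 2 := by
  obtain ⟨C, hC, hCw⟩ := hw.exists_pos
  obtain ⟨ε, hε, hεw⟩ := Metric.eventually_nhds_iff.mp (eventually_nhdsWithin_iff.mp hCw.bound)
  refine ⟨C, hC, ε / 2, by positivity, fun a _ haδ y hy hya => ?_⟩
  have hyε : dist y 0 < ε := by rw [Real.dist_eq, sub_zero]; linarith
  calc |w y| ≤ C * ‖y ^ 2‖ := hεw hyε hy
    _ ≤ C * a ^ 2 := by
      rw [Real.norm_eq_abs, abs_pow]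
      gcongr

theorem stmt19_general (φ : ℝ → ℝ → ℝ)
    (hC2 : ContDiffOn ℝ 2 (fun p : ℝ × ℝ => φ p.1 p.2) (univ ×ˢ Ici 0))
    (hmono : ∀ y z : ℝ, 0 ≤ z → 0 ≤ deriv (φ y) z)
    (hnorm : φ 0 1 = 1)
    (g : ℝ → ℝ) (hg : ContDiff ℝ 1 g) (hg0 : g 0 = 0)
    (hg0' : deriv g 0 = 1)
    (hode : ∀ y : ℝ, y ≠ 0 → deriv g y = φ y (y / g y))
    (β : ℝ) (hβ : β = deriv (fun y => φ y 1) 0 / (1 + (1 / 2) * deriv (φ 0) 1)) :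
    ∃ C > (0 : ℝ), ∃ δ > (0 : ℝ), ∀ a : ℝ, 0 < a → a ≤ δ →
      ∀ y : ℝ, y ≠ 0 → |y| ≤ a → |g y / y - (1 + β * y / 2)| ≤ C * a ^ 2 := by
  set A := deriv (φ 0) 1
  have hA : 0 ≤ A := hmono 0 1 zero_le_one
  have hg' : Differentiable ℝ g := hg.differentiable one_ne_zero
  have hT : (fun p : ℝ × ℝ => φ p.1 p.2 - 1 - β * (2 + A) / 2 * p.1 - A * (p.2 - 1))
      =O[𝓝 (0, 1)] fun p => p.1 ^ 2 + (p.2 - 1) ^ 2 := by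
    have hφ : ContDiffAt ℝ 2 (fun p : ℝ × ℝ => φ p.1 p.2) (0, 1) :=
      hC2.contDiffAt (prod_mem_nhds univ_mem (Ici_mem_nhds zero_lt_one))
    have hβ' : β * (2 + A) / 2 = deriv (fun y => φ y 1) 0 := by
      rw [hβ]; field_simp
    simpa [hnorm, hβ'] using hφ.isBigO_sub_sub_partial_derivs
  have hq : Tendsto (fun y => g y / y) (𝓝[≠] 0) (𝓝 1) :=
    (hg0' ▸ (hg' 0).hasDerivAt).tendsto_div_self_nhdsNE hg0
  have hw : Tendsto (fun y => g y / y - (1 + β * y / 2)) (𝓝[≠] 0) (𝓝 0) := by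
    have h : Tendsto (fun y : ℝ => 1 + β * y / 2) (𝓝 0) (𝓝 1) := by
      simpa using (show Continuous fun y : ℝ => 1 + β * y / 2 by fun_prop).tendsto 0
    simpa using hq.sub (h.mono_left nhdsWithin_le_nhds)
  have hdiff : ∀ᶠ y in 𝓝[≠] 0, DifferentiableAt ℝ (fun y => g y / y - (1 + β * y / 2)) y :=
    eventually_mem_nhdsWithin.mono fun y hy =>
      ((hg' y).div differentiableAt_id hy).sub (by fun_prop)
  exact exists_abs_le_mul_sq_of_isBigO <| isBigO_sq_nhdsNE_of_mul_deriv_add (by linarith) hw hdiff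
    (mul_deriv_add_isBigO_of_ode hT hg' hq hode)

theorem stmt19 (φ : ℝ → ℝ → ℝ)
    (hC2 : ContDiffOn ℝ 2 (fun p : ℝ × ℝ => φ p.1 p.2) (univ ×ˢ Ici 0))
    (hpos : ∀ y z : ℝ, 0 ≤ z → 0 < φ y z)
    (hmono : ∀ y z : ℝ, 0 ≤ z → 0 ≤ deriv (φ y) z)
    (hbdd : ∃ C : ℝ, ∀ y z : ℝ, 0 ≤ z → deriv (φ y) z ≤ C)
    (hcontr : deriv (φ 0) 1 < 1)
    (hnorm : φ 0 1 = 1)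
    (hfix : ∀ α : ℝ, α > 0 → α = φ 0 (1 / φ 0 (1 / α)) → α = 1)
    (g : ℝ → ℝ) (hg : ContDiff ℝ 1 g) (hg0 : g 0 = 0)
    (hgpos : ∀ y : ℝ, y ≠ 0 → g y / y > 0) (hg0' : deriv g 0 = 1)
    (hode : ∀ y : ℝ, y ≠ 0 → deriv g y = φ y (y / g y))
    (β : ℝ) (hβ : β = deriv (fun y => φ y 1) 0 / (1 + (1 / 2) * deriv (φ 0) 1)) :
    ∃ C > (0 : ℝ), ∃ δ > (0 : ℝ), ∀ a : ℝ, 0 < a → a ≤ δ →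
      ∀ y : ℝ, y ≠ 0 → |y| ≤ a → |g y / y - (1 + β * y / 2)| ≤ C * a ^ 2 :=
  stmt19_general φ hC2 hmono hnorm g hg hg0 hg0' hode β hβ
end
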